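/- arXiv:2404.03867 — 2 statements merged into one kernel-verified Lean document; each statement's English description precedes it below -/
import Mathlib

section
/- Suppose R > M and let S ∈ (M, R]. Then there exist a weight function w : E_S → (0,∞) and a flow φ : Γ_S → [0,∞) with Σ_{γ∈Γ_S(x,x')} φ(γ) = π(x)·π(x') for all x ≠ x', such that A(E_S, w, φ) ≤ (c(S/M)/2)·max_{z∈X∖{x*}} 1/P(z, N_S(z)), where P(z, N_S(z)) = Σ_{z'∈N_S(z)} P(z,z'). -/
open Finset

noncomputable section

variable {X : Type*}

/-- Total variation distance between two (finitely supported) distributions. -/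
def tvDist [Fintype X] (ζ μ : X → ℝ) : ℝ :=
  ⨆ A : Finset X, |∑ a ∈ A, ζ a - ∑ a ∈ A, μ a|

/-- The lazy version `(P + I)/2` of a transition matrix. -/
def lazyM [Fintype X] [DecidableEq X] (P : Matrix X X ℝ) : Matrix X X ℝ :=
  (2 : ℝ)⁻¹ • (P + 1)

/-- Mixing time started from `x`. -/
def mixTimeFrom [Fintype X] [DecidableEq X] (P : Matrix X X ℝ) (μ : X → ℝ) (ε : ℝ) (x : X) : ℕ :=
  sInf {t : ℕ | tvDist (fun y => (P ^ t) x y) μ ≤ ε}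

/-- Worst-case mixing time. -/
def mixTime [Fintype X] [DecidableEq X] (P : Matrix X X ℝ) (μ : X → ℝ) (ε : ℝ) : ℕ :=
  Finset.univ.sup (mixTimeFrom P μ ε)

/-- Variational spectral gap of a reversible transition matrix. -/
def specGap [Fintype X] (P : Matrix X X ℝ) (μ : X → ℝ) : ℝ :=
  sInf { r : ℝ | ∃ f : X → ℝ,
    (2⁻¹ * ∑ x, ∑ y, (f x - f y) ^ 2 * μ x * μ y) ≠ 0 ∧
    r = (2⁻¹ * ∑ x, ∑ y, (f x - f y) ^ 2 * P x y * μ x) /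
        (2⁻¹ * ∑ x, ∑ y, (f x - f y) ^ 2 * μ x * μ y) }

/-- Restricted spectral gap on `X0`. -/
def restGap [Fintype X] (P : Matrix X X ℝ) (μ : X → ℝ) (X0 : Finset X) : ℝ :=
  sInf { r : ℝ | ∃ f : X → ℝ,
    0 < (∑ x ∈ X0, ∑ y ∈ X0, (f x - f y) ^ 2 * μ x * μ y) ∧
    r = (∑ x ∈ X0, ∑ y ∈ X0, (f x - f y) ^ 2 * P x y * μ x) /
        (∑ x ∈ X0, ∑ y ∈ X0, (f x - f y) ^ 2 * μ x * μ y) }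

/-- `c(ρ) = 4 / (1 - ρ^{-1/2})³`. -/
def cFun (ρ : ℝ) : ℝ := 4 / (1 - ρ ^ (-(2 : ℝ)⁻¹)) ^ 3

/-- Maximum neighborhood size. -/
def Mmax [Fintype X] (N : X → Finset X) : ℕ := Finset.univ.sup fun x => (N x).card

/-- Minimal value of `π`. -/
def piMin [Fintype X] [Nonempty X] (π : X → ℝ) : ℝ := ⨅ x, π x

/-- `R = min_{x ≠ x*} max_{y ∈ N(x)} π(y)/π(x)`. -/
def Rval [Fintype X] (π : X → ℝ) (N : X → Finset X) (xstar : X) : ℝ :=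
  sInf ((fun x => sSup ((fun y => π y / π x) '' (N x : Set X))) '' {x | x ≠ xstar})

/-- Restricted `R|_{X₀}`. -/
def RvalRes [Fintype X] [DecidableEq X] (π : X → ℝ) (N : X → Finset X) (X0 : Finset X)
    (x0star : X) : ℝ :=
  sInf ((fun x => sSup ((fun y => π y / π x) '' ((N x ∩ X0 : Finset X) : Set X))) ''
    {x | x ∈ X0 ∧ x ≠ x0star})

/-- Random walk Metropolis–Hastings transition matrix. -/
def rwMH [Fintype X] [DecidableEq X] (π : X → ℝ) (N : X → Finset X) : Matrix X X ℝ :=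
  Matrix.of fun x y =>
    if y ∈ N x then min (((N x).card : ℝ))⁻¹ (π y / (π x * ((N y).card : ℝ)))
    else if y = x then
      1 - ∑ z ∈ N x, min (((N x).card : ℝ))⁻¹ (π z / (π x * ((N z).card : ℝ)))
    else 0

/-- The clipping function `clip(u, ℓ, L)`. -/
def clip (l L u : ℝ) : ℝ := if u < l then l else if u ≤ L then u else L

/-- Normalizing constant of the informed proposal. -/
def Zh [Fintype X] (π : X → ℝ) (N : X → Finset X) (l L : ℝ) (x : X) : ℝ :=
  ∑ y ∈ N x, clip l L (π y / π x)

/-- Informed proposal kernel. -/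
def Kh [Fintype X] [DecidableEq X] (π : X → ℝ) (N : X → Finset X) (l L : ℝ) (x y : X) : ℝ :=
  (if y ∈ N x then clip l L (π y / π x) else 0) / Zh π N l L x

/-- Informed Metropolis–Hastings transition matrix. -/
def infMH [Fintype X] [DecidableEq X] (π : X → ℝ) (N : X → Finset X) (l L : ℝ) :
    Matrix X X ℝ :=
  Matrix.of fun x y =>
    if y = x then
      1 - ∑ z ∈ Finset.univ.erase x,
        Kh π N l L x z * min 1 ((π z * Kh π N l L z x) / (π x * Kh π N l L x z))
    else Kh π N l L x y * min 1 ((π y * Kh π N l L y x) / (π x * Kh π N l L x y))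

/-- List of consecutive edges of a list of vertices. -/
def edgeList : List X → List (X × X)
  | a :: b :: rest => (a, b) :: edgeList (b :: rest)
  | _ => []

/-- `γ` is a path from `x` to `y` (x ≠ y) with all edges in `E` and no repeated edge. -/
def IsPathIn (E : Finset (X × X)) (x y : X) (γ : List X) : Prop :=
  x ≠ y ∧ γ.head? = some x ∧ γ.getLast? = some y ∧
    (∀ e ∈ edgeList γ, e ∈ E) ∧ (edgeList γ).Nodup

/-- `Φ(x,y) = Σ_{γ ∈ Γ_E(x,y)} φ(γ)`. -/
def flowBetween (E : Finset (X × X)) (φ : List X → ℝ) (x y : X) : ℝ :=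
  ∑' γ : {γ : List X // IsPathIn E x y γ}, φ γ

/-- Flow from `x` to `y` through the edge `e`. -/
def flowBetweenThrough (E : Finset (X × X)) (φ : List X → ℝ) (x y : X) (e : X × X) : ℝ :=
  ∑' γ : {γ : List X // IsPathIn E x y γ ∧ e ∈ edgeList γ}, φ γ

/-- `w`-length of a path. -/
def wlen (w : X × X → ℝ) (γ : List X) : ℝ := ((edgeList γ).map w).sum

/-- Congestion `A(E, w, φ)`. -/
def congestion [Fintype X] (π : X → ℝ) (P : Matrix X X ℝ) (E : Finset (X × X))
    (w : X × X → ℝ) (φ : List X → ℝ) : ℝ :=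
  ⨆ e ∈ E,
    (∑' γ : {γ : List X // (∃ x y, IsPathIn E x y γ) ∧ e ∈ edgeList γ}, wlen w γ * φ γ) /
      (π e.1 * P e.1 e.2 * w e)

/-- `N_S(x) = {x' ∈ N(x) : π(x')/π(x) ≥ S}`. -/
def NS [Fintype X] (π : X → ℝ) (N : X → Finset X) (S : ℝ) (x : X) : Finset X :=
  (N x).filter fun y => S ≤ π y / π x

/-- Edge set `E_S`. -/
def ES [Fintype X] [DecidableEq X] (π : X → ℝ) (N : X → Finset X) (S : ℝ) : Finset (X × X) :=
  Finset.univ.filter fun e => e.1 ∈ NS π N S e.2 ∨ e.2 ∈ NS π N S e.1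

/-- Restricted `N|^S_{X₀}(x)`. -/
def NSres [Fintype X] [DecidableEq X] (π : X → ℝ) (N : X → Finset X) (X0 : Finset X) (S : ℝ)
    (x : X) : Finset X :=
  ((N x) ∩ X0).filter fun y => S ≤ π y / π x

/-- Restricted edge set `E_S⁰`. -/
def ESres [Fintype X] [DecidableEq X] (π : X → ℝ) (N : X → Finset X) (X0 : Finset X)
    (S : ℝ) : Finset (X × X) :=
  Finset.univ.filter fun e =>
    (e.1 ∈ X0 ∧ e.2 ∈ X0) ∧ (e.1 ∈ NSres π N X0 S e.2 ∨ e.2 ∈ NSres π N X0 S e.1)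

end

/-!
For `z ≠ x*` the set `N_S(z)` is nonempty (as `S ≤ R`), and `π` grows by a factor `≥ S > 1` along
each edge from `z` into `N_S(z)`. The flow sends the mass `π(x)π(y)` from `x` to `y` along a random
path: run from `x` the walk that jumps from `z` to `z' ∈ N_S(z)` with probability
`q(z,z') = P(z,z')/P(z,N_S(z))` until it reaches `x*`, then descend to `y` along the reversal of an
independent such walk from `y`. Edge weights are `w(e) = min(π(e₁),π(e₂))^(-β)` with
`S^(-β) = r = (S/M)^(-1/2)`.

An edge `(a,b)` with `b ∈ N_S(a)` is crossed upwards only by the first walk and downwards only by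
the second, so its congestion is controlled by `E[1_{(a,b)} L] + E[1_{(a,b)}] E[L]`, where `L` is
the `w`-length of a walk and the start is drawn from `π`. As every state has at most `M` neighbours,
`π` is `r²`-subinvariant and `π^(1-β)` is `r`-subinvariant for `q`; averaging the first-step
recursions of these expectations against these weights turns them into geometric series in `r`,
with total at most `2/(1-r)³ · π(a) q(a,b) w(a,b) = c(S/M)/2 · Q(a,b) w(a,b) / P(a,N_S(a))`.
-/

section

variable {X : Type*}

theorem edgeList_cons_of_head? {l : List X} {u : X} (h : l.head? = some u) (z : X) :
    edgeList (z :: l) = (z, u) :: edgeList l := by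
  cases l with
  | nil => cases h
  | cons a t => obtain rfl := Option.some.inj h; rfl

theorem map_fst_edgeList : ∀ l : List X, (edgeList l).map Prod.fst = l.dropLast
  | [] | [_] => rfl
  | a :: b :: t => by simp [edgeList, map_fst_edgeList (b :: t)]

theorem nodup_edgeList {l : List X} (h : l.Nodup) : (edgeList l).Nodup :=
  .of_map Prod.fst <| (map_fst_edgeList l).symm ▸ h.sublist (List.dropLast_sublist l)

theorem edgeList_append_cons : ∀ (l₁ : List X) (x : X) (l₂ : List X),
    edgeList (l₁ ++ x :: l₂) = edgeList (l₁ ++ [x]) ++ edgeList (x :: l₂)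
  | [], _, _ | [_], _, _ => rfl
  | a :: b :: t, x, l₂ => by
    have := edgeList_append_cons (b :: t) x l₂
    simp only [List.cons_append, edgeList] at this ⊢
    rw [this]

theorem edgeList_reverse : ∀ l : List X,
    edgeList l.reverse = ((edgeList l).map Prod.swap).reverse
  | [] | [_] => rfl
  | a :: b :: t => by
    rw [List.reverse_cons, List.reverse_cons, List.append_assoc, List.singleton_append,
      edgeList_append_cons, ← List.reverse_cons, edgeList_reverse (b :: t)]
    simp [edgeList]

theorem mem_edgeList_reverse {l : List X} {e : X × X} :
    e ∈ edgeList l.reverse ↔ e.swap ∈ edgeList l := by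
  simp [edgeList_reverse, Prod.swap_eq_iff_eq_swap]

theorem List.IsChain.rel_of_mem_edgeList {R : X → X → Prop} :
    ∀ {l : List X}, l.IsChain R → ∀ e ∈ edgeList l, R e.1 e.2
  | [], _, _, he | [_], _, _, he => by simp [edgeList] at he
  | a :: b :: t, h, e, he => by
    rw [List.isChain_cons_cons] at h
    rcases List.mem_cons.mp he with rfl | he
    exacts [h.1, h.2.rel_of_mem_edgeList e he]

theorem wlen_reverse {w : X × X → ℝ} (hw : ∀ e, w e.swap = w e) (l : List X) :
    wlen w l.reverse = wlen w l := by
  simp [wlen, edgeList_reverse, Function.comp_def, hw]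

section UpPaths

variable {π : X → ℝ} {T : X → Finset X} {xstar z : X} {γ : List X}

theorem pairwise_of_isChain_up (hT : ∀ z, ∀ u ∈ T z, π z < π u)
    (h : γ.IsChain fun a b => b ∈ T a) : γ.Pairwise fun a b => π a < π b :=
  have : IsTrans X fun a b => π a < π b := ⟨fun _ _ _ => lt_trans⟩
  List.isChain_iff_pairwise.mp (h.imp fun a b => hT a b)

theorem up_induction [Finite X] (hT : ∀ z, ∀ u ∈ T z, π z < π u) {p : X → Prop}
    (h : ∀ z, (∀ u ∈ T z, p u) → p z) (z : X) : p z :=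
  have : IsTrans X fun a b => π b < π a := ⟨fun _ _ _ h₁ h₂ => h₂.trans h₁⟩
  have : Std.Irrefl fun a b : X => π b < π a := ⟨fun _ => lt_irrefl _⟩
  (Finite.wellFounded_of_trans_of_irrefl fun a b : X => π b < π a).induction z
    fun z ih => h z fun u hu => ih u (hT z u hu)

variable [Fintype X] [DecidableEq X]

-- Ascending paths repeat no vertex, so they are among the finitely many duplicate-free lists.
variable (T xstar) in
open Classical in
noncomputable def upPaths (z : X) : Finset (List X) :=
  (univ.map (Function.Embedding.subtype List.Nodup)).filter fun γ =>
    γ.head? = some z ∧ γ.getLast? = some xstar ∧ γ.IsChain fun a b => b ∈ T a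

theorem mem_upPaths (hT : ∀ z, ∀ u ∈ T z, π z < π u) :
    γ ∈ upPaths T xstar z ↔
      γ.head? = some z ∧ γ.getLast? = some xstar ∧ γ.IsChain fun a b => b ∈ T a := by
  simp only [upPaths, mem_filter, mem_map, mem_univ, true_and, Function.Embedding.subtype_apply,
    Subtype.exists, exists_prop, exists_eq_right, and_iff_right_iff_imp]
  exact fun h => (pairwise_of_isChain_up hT h.2.2).imp (ne_of_apply_ne π ∘ ne_of_lt)

theorem upPaths_self (hT : ∀ z, ∀ u ∈ T z, π z < π u) : upPaths T xstar xstar = {[xstar]} := by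
  ext γ
  rw [mem_upPaths hT, mem_singleton]
  refine ⟨fun ⟨hh, hl, hc⟩ => ?_, by rintro rfl; simp⟩
  obtain ⟨_ | ⟨b, t⟩, rfl⟩ : ∃ t, γ = xstar :: t := by
    cases γ with
    | nil => cases hh
    | cons a t => exact ⟨t, by cases hh; rfl⟩
  · rfl
  · have hlt := List.rel_of_pairwise_cons (pairwise_of_isChain_up hT hc)
      (List.mem_of_getLast? (by simpa using hl))
    exact absurd hlt (lt_irrefl _)

theorem upPaths_of_ne (hT : ∀ z, ∀ u ∈ T z, π z < π u) (hz : z ≠ xstar) :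
    upPaths T xstar z = (T z).biUnion fun u => (upPaths T xstar u).image (z :: ·) := by
  ext γ
  simp only [mem_biUnion, mem_image, mem_upPaths hT]
  constructor
  · rintro ⟨hh, hl, hc⟩
    match γ, hh, hl, hc with
    | [a], hh, hl, _ => cases hh; cases hl; exact absurd rfl hz
    | a :: b :: t, hh, hl, hc =>
      cases hh
      rw [List.isChain_cons_cons] at hc
      exact ⟨b, hc.1, b :: t, ⟨rfl, by simpa using hl, hc.2⟩, rfl⟩
  · rintro ⟨u, hu, γ, ⟨hh, hl, hc⟩, rfl⟩
    cases γ with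
    | nil => cases hh
    | cons b t =>
      cases hh
      exact ⟨rfl, by simpa using hl, List.isChain_cons_cons.mpr ⟨hu, hc⟩⟩

theorem head?_of_mem_upPaths (hT : ∀ z, ∀ u ∈ T z, π z < π u) (h : γ ∈ upPaths T xstar z) :
    γ.head? = some z :=
  ((mem_upPaths hT).mp h).1

theorem getLast?_of_mem_upPaths (hT : ∀ z, ∀ u ∈ T z, π z < π u)
    (h : γ ∈ upPaths T xstar z) : γ.getLast? = some xstar :=
  ((mem_upPaths hT).mp h).2.1

theorem nodup_of_mem_upPaths (hT : ∀ z, ∀ u ∈ T z, π z < π u) (h : γ ∈ upPaths T xstar z) :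
    γ.Nodup :=
  (pairwise_of_isChain_up hT ((mem_upPaths hT).mp h).2.2).imp (ne_of_apply_ne π ∘ ne_of_lt)

theorem mem_of_mem_edgeList_of_mem_upPaths (hT : ∀ z, ∀ u ∈ T z, π z < π u)
    (h : γ ∈ upPaths T xstar z) {e : X × X} (he : e ∈ edgeList γ) : e.2 ∈ T e.1 :=
  ((mem_upPaths hT).mp h).2.2.rel_of_mem_edgeList e he

theorem dropLast_append_of_mem_upPaths (hT : ∀ z, ∀ u ∈ T z, π z < π u)
    (h : γ ∈ upPaths T xstar z) : γ.dropLast ++ [xstar] = γ := by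
  have hne : γ ≠ [] := by rintro rfl; cases head?_of_mem_upPaths hT h
  have hlast := getLast?_of_mem_upPaths hT h
  rw [List.getLast?_eq_some_getLast hne, Option.some_inj] at hlast
  rw [← hlast, List.dropLast_append_getLast]

end UpPaths

def pathProb (q : X → X → ℝ) (γ : List X) : ℝ := ((edgeList γ).map fun e => q e.1 e.2).prod

def visits [DecidableEq X] (e : X × X) (γ : List X) : ℝ := if e ∈ edgeList γ then 1 else 0

theorem pathProb_nonneg {q : X → X → ℝ} (hq : ∀ x u, 0 ≤ q x u) (γ : List X) :
    0 ≤ pathProb q γ :=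
  List.prod_nonneg <| by simp only [List.mem_map]; rintro _ ⟨e, -, rfl⟩; exact hq _ _

theorem pathProb_cons_of_head? {q : X → X → ℝ} {γ : List X} {u : X} (h : γ.head? = some u)
    (z : X) : pathProb q (z :: γ) = q z u * pathProb q γ := by
  rw [pathProb, pathProb, edgeList_cons_of_head? h, List.map_cons, List.prod_cons]

theorem wlen_cons_of_head? {w : X × X → ℝ} {γ : List X} {u : X} (h : γ.head? = some u)
    (z : X) : wlen w (z :: γ) = w (z, u) + wlen w γ := by
  rw [wlen, wlen, edgeList_cons_of_head? h, List.map_cons, List.sum_cons]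

theorem visits_cons_le_of_head? [DecidableEq X] {e : X × X} {γ : List X} {u : X}
    (h : γ.head? = some u) (z : X) :
    visits e (z :: γ) ≤ (if (z, u) = e then 1 else 0) + visits e γ := by
  simp only [visits, edgeList_cons_of_head? h, List.mem_cons]
  split_ifs <;> simp_all

theorem visits_nonneg [DecidableEq X] (e : X × X) (γ : List X) : 0 ≤ visits e γ := by
  unfold visits; split_ifs <;> norm_num

theorem wlen_nonneg {w : X × X → ℝ} (hw : ∀ e, 0 ≤ w e) (γ : List X) : 0 ≤ wlen w γ :=
  List.sum_nonneg <| by simp only [List.mem_map]; rintro _ ⟨e, -, rfl⟩; exact hw e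

section UpWalk

variable [Fintype X] [DecidableEq X] {π : X → ℝ} {T : X → Finset X} {xstar z : X}
  {q : X → X → ℝ} {h h' : List X → ℝ}

variable (T xstar q) in
noncomputable def upExp (h : List X → ℝ) (z : X) : ℝ :=
  ∑ γ ∈ upPaths T xstar z, pathProb q γ * h γ

theorem upExp_self (hT : ∀ z, ∀ u ∈ T z, π z < π u) (h : List X → ℝ) :
    upExp T xstar q h xstar = h [xstar] := by
  simp [upExp, upPaths_self hT, pathProb, edgeList]

theorem upExp_of_ne (hT : ∀ z, ∀ u ∈ T z, π z < π u) (hz : z ≠ xstar) (h : List X → ℝ) :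
    upExp T xstar q h z = ∑ u ∈ T z, q z u * upExp T xstar q (fun γ => h (z :: γ)) u := by
  rw [upExp, upPaths_of_ne hT hz, sum_biUnion]
  · refine sum_congr rfl fun u _ => ?_
    rw [sum_image fun _ _ _ _ h => List.cons_injective h, upExp, mul_sum]
    refine sum_congr rfl fun γ hγ => ?_
    rw [pathProb_cons_of_head? (head?_of_mem_upPaths hT hγ), mul_assoc]
  · intro u _ v _ huv
    simp only [Function.onFun, disjoint_left, mem_image]
    rintro _ ⟨γ, hγ, rfl⟩ ⟨γ', hγ', hγγ'⟩
    obtain rfl := List.cons_injective hγγ'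
    exact huv (Option.some_inj.mp <|
      (head?_of_mem_upPaths hT hγ).symm.trans (head?_of_mem_upPaths hT hγ'))

theorem upExp_mono (hq : ∀ x u, 0 ≤ q x u) (hh : ∀ γ ∈ upPaths T xstar z, h γ ≤ h' γ) :
    upExp T xstar q h z ≤ upExp T xstar q h' z :=
  sum_le_sum fun γ hγ => mul_le_mul_of_nonneg_left (hh γ hγ) (pathProb_nonneg hq γ)

theorem upExp_nonneg (hq : ∀ x u, 0 ≤ q x u) (hh : ∀ γ, 0 ≤ h γ) : 0 ≤ upExp T xstar q h z :=
  sum_nonneg fun γ _ => mul_nonneg (pathProb_nonneg hq γ) (hh γ)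

theorem upExp_add : upExp T xstar q (fun γ => h γ + h' γ) z =
    upExp T xstar q h z + upExp T xstar q h' z := by
  simp only [upExp, mul_add, sum_add_distrib]

theorem upExp_const_mul (c : ℝ) :
    upExp T xstar q (fun γ => c * h γ) z = c * upExp T xstar q h z := by
  simp only [upExp, mul_sum]; exact sum_congr rfl fun _ _ => by ring

theorem upExp_one (hT : ∀ z, ∀ u ∈ T z, π z < π u)
    (hq1 : ∀ z ≠ xstar, ∑ u ∈ T z, q z u = 1) (z : X) : upExp T xstar q (fun _ => 1) z = 1 := by
  induction z using up_induction hT with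
  | h z ih =>
    rcases eq_or_ne z xstar with rfl | hz
    · exact upExp_self hT _
    · rw [upExp_of_ne hT hz]
      exact (sum_congr rfl fun u hu => by rw [ih u hu, mul_one]).trans (hq1 z hz)

theorem upExp_const_add (hT : ∀ z, ∀ u ∈ T z, π z < π u)
    (hq1 : ∀ z ≠ xstar, ∑ u ∈ T z, q z u = 1) (c : ℝ) :
    upExp T xstar q (fun γ => c + h γ) z = c + upExp T xstar q h z := by
  calc upExp T xstar q (fun γ => c + h γ) z
      = upExp T xstar q (fun _ => c * 1) z + upExp T xstar q h z := by rw [← upExp_add]; simp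
    _ = c + upExp T xstar q h z := by rw [upExp_const_mul, upExp_one hT hq1, mul_one]

theorem upExp_le_sum (hT : ∀ z, ∀ u ∈ T z, π z < π u) (hq : ∀ x u, 0 ≤ q x u)
    {g : X → X → List X → ℝ} (hself : h [xstar] ≤ 0) (hg : ∀ z u γ, 0 ≤ g z u γ)
    (hstep : ∀ z, ∀ u ∈ T z, ∀ γ, γ.head? = some u → h (z :: γ) ≤ g z u γ) (z : X) :
    upExp T xstar q h z ≤ ∑ u ∈ T z, q z u * upExp T xstar q (g z u) u := by
  rcases eq_or_ne z xstar with rfl | hz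
  · rw [upExp_self hT]
    exact hself.trans <| sum_nonneg fun u _ => mul_nonneg (hq _ _) (upExp_nonneg hq (hg _ _))
  · rw [upExp_of_ne hT hz]
    gcongr with u hu
    · exact hq _ _
    · exact upExp_mono hq fun γ hγ => hstep z u hu γ (head?_of_mem_upPaths hT hγ)

end UpWalk

section Subinvariant

variable [Fintype X] [DecidableEq X] {π ρ f : X → ℝ} {T : X → Finset X} {xstar a b : X}
  {q : X → X → ℝ} {κ : ℝ}

def IsSubinvariant (T : X → Finset X) (q : X → X → ℝ) (κ : ℝ) (ρ : X → ℝ) : Prop :=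
  ∀ u, ∑ x ∈ univ.filter (u ∈ T ·), ρ x * q x u ≤ κ * ρ u

theorem IsSubinvariant.sum_mul_sum_le (hρ : IsSubinvariant T q κ ρ) (hf : ∀ u, 0 ≤ f u) :
    ∑ x, ρ x * ∑ u ∈ T x, q x u * f u ≤ κ * ∑ u, ρ u * f u := calc
  _ = ∑ u, (∑ x ∈ univ.filter (u ∈ T ·), ρ x * q x u) * f u := by
    simp_rw [mul_sum, sum_mul]
    exact (sum_comm' (by simp)).trans (sum_congr rfl fun _ _ => sum_congr rfl fun _ _ => by ring)
  _ ≤ ∑ u, κ * ρ u * f u := by gcongr with u; exacts [hf u, hρ u]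
  _ = κ * ∑ u, ρ u * f u := by simp_rw [mul_sum, mul_assoc]

theorem IsSubinvariant.sum_mul_le (hρ : IsSubinvariant T q κ ρ) (hρ0 : ∀ x, 0 ≤ ρ x)
    (hf0 : ∀ u, 0 ≤ f u) {c : X → X → ℝ} (hf : ∀ z, f z ≤ ∑ u ∈ T z, q z u * (c z u + f u)) :
    ∑ x, ρ x * f x ≤ ∑ x, ρ x * ∑ u ∈ T x, q x u * c x u + κ * ∑ x, ρ x * f x := calc
  _ ≤ ∑ x, ρ x * ∑ u ∈ T x, q x u * (c x u + f u) :=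
    sum_le_sum fun x _ => mul_le_mul_of_nonneg_left (hf x) (hρ0 x)
  _ = ∑ x, ρ x * ∑ u ∈ T x, q x u * c x u + ∑ x, ρ x * ∑ u ∈ T x, q x u * f u := by
    simp only [mul_add, sum_add_distrib]
  _ ≤ _ := add_le_add_right (hρ.sum_mul_sum_le hf0) _

theorem sum_mul_sum_ite_eq (hab : b ∈ T a) (v : X → X → ℝ) :
    ∑ x, ρ x * ∑ u ∈ T x, q x u * ((if (x, u) = (a, b) then 1 else 0) * v x u) =
      ρ a * q a b * v a b := by
  simp [Prod.ext_iff, ite_and, hab, mul_assoc]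

theorem IsSubinvariant.sum_le (hρ : IsSubinvariant T q κ ρ)
    (hq1 : ∀ z ≠ xstar, ∑ u ∈ T z, q z u = 1) (hTx : T xstar = ∅) :
    (1 - κ) * ∑ x, ρ x ≤ ρ xstar := by
  have hsum : ∑ x, ρ x * ∑ u ∈ T x, q x u * 1 = ∑ x, ρ x - ρ xstar := by
    rw [← add_sum_erase _ _ (mem_univ xstar), ← add_sum_erase _ ρ (mem_univ xstar),
      add_sub_cancel_left, hTx, sum_empty, mul_zero, zero_add]
    exact sum_congr rfl fun x hx => by simp [hq1 x (ne_of_mem_erase hx)]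
  have := hρ.sum_mul_sum_le (f := 1) fun _ => zero_le_one
  simp only [Pi.one_apply, mul_one] at this hsum
  linarith

end Subinvariant

section WalkBounds

variable [Fintype X] [DecidableEq X] {π ρ ω : X → ℝ} {T : X → Finset X} {xstar a b : X}
  {q : X → X → ℝ} {w : X × X → ℝ} {r κ : ℝ}

theorem upExp_visits_le_sum (hT : ∀ z, ∀ u ∈ T z, π z < π u) (hq : ∀ x u, 0 ≤ q x u)
    (hq1 : ∀ z ≠ xstar, ∑ u ∈ T z, q z u = 1) (e : X × X) (z : X) :
    upExp T xstar q (visits e) z ≤ ∑ u ∈ T z, q z u *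
      ((if (z, u) = e then 1 else 0) * 1 + upExp T xstar q (visits e) u) := by
  refine (upExp_le_sum hT hq (g := fun z u γ => (if (z, u) = e then 1 else 0) * 1 + visits e γ)
    (by simp [visits, edgeList]) (fun z u γ => ?_)
    (fun z u _ γ hγ => by simpa only [mul_one] using visits_cons_le_of_head? hγ z) z).trans_eq ?_
  · exact add_nonneg (by split_ifs <;> norm_num) (visits_nonneg _ _)
  · simp only [upExp_const_add hT hq1]

theorem IsSubinvariant.sum_mul_upExp_visits_le (hρ : IsSubinvariant T q κ ρ)
    (hρ0 : ∀ x, 0 ≤ ρ x) (hT : ∀ z, ∀ u ∈ T z, π z < π u) (hq : ∀ x u, 0 ≤ q x u)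
    (hq1 : ∀ z ≠ xstar, ∑ u ∈ T z, q z u = 1) (hab : b ∈ T a) :
    (1 - κ) * ∑ x, ρ x * upExp T xstar q (visits (a, b)) x ≤ ρ a * q a b := by
  have := hρ.sum_mul_le hρ0 (fun _ => upExp_nonneg hq (visits_nonneg _))
    (upExp_visits_le_sum hT hq hq1 (a, b))
  rw [sum_mul_sum_ite_eq hab, mul_one] at this
  linarith

theorem upExp_wlen_le (hT : ∀ z, ∀ u ∈ T z, π z < π u) (hq : ∀ x u, 0 ≤ q x u)
    (hq1 : ∀ z ≠ xstar, ∑ u ∈ T z, q z u = 1) (hr : r < 1) (hω0 : ∀ z, 0 ≤ ω z)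
    (hω : ∀ z, ∀ u ∈ T z, ω u ≤ r * ω z) (hw0 : ∀ e, 0 ≤ w e)
    (hw : ∀ z, ∀ u ∈ T z, w (z, u) = ω z) (z : X) :
    upExp T xstar q (wlen w) z ≤ ω z / (1 - r) := by
  have h1r : 0 < 1 - r := sub_pos.mpr hr
  induction z using up_induction hT with
  | h z ih =>
    rcases eq_or_ne z xstar with rfl | hz
    · rw [upExp_self hT]
      simpa [wlen, edgeList] using div_nonneg (hω0 _) h1r.le
    calc upExp T xstar q (wlen w) z
        ≤ ∑ u ∈ T z, q z u * upExp T xstar q (fun γ => ω z + wlen w γ) u :=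
          upExp_le_sum hT hq (by simp [wlen, edgeList])
            (fun z _ γ => add_nonneg (hω0 z) (wlen_nonneg hw0 γ))
            (fun z u hu γ hγ => by rw [wlen_cons_of_head? hγ, hw z u hu]) z
      _ ≤ ∑ u ∈ T z, q z u * (ω z / (1 - r)) := by
          gcongr with u hu
          · exact hq _ _
          rw [upExp_const_add hT hq1]
          calc ω z + upExp T xstar q (wlen w) u ≤ ω z + r * ω z / (1 - r) := by
                gcongr; exact (ih u hu).trans (by gcongr; exact hω z u hu)
            _ = ω z / (1 - r) := by field_simp; ring
      _ = ω z / (1 - r) := by rw [← sum_mul, hq1 z hz, one_mul]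

theorem upExp_visits_mul_wlen_le_sum (hT : ∀ z, ∀ u ∈ T z, π z < π u) (hq : ∀ x u, 0 ≤ q x u)
    (hq1 : ∀ z ≠ xstar, ∑ u ∈ T z, q z u = 1) (hω0 : ∀ z, 0 ≤ ω z) (hw0 : ∀ e, 0 ≤ w e)
    (hw : ∀ z, ∀ u ∈ T z, w (z, u) = ω z) (e : X × X) (z : X) :
    upExp T xstar q (fun γ => visits e γ * wlen w γ) z ≤ ∑ u ∈ T z, q z u *
      (((if (z, u) = e then 1 else 0) * (ω z + upExp T xstar q (wlen w) u) +
          ω z * upExp T xstar q (visits e) u) +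
        upExp T xstar q (fun γ => visits e γ * wlen w γ) u) := by
  refine (upExp_le_sum hT hq (g := fun z u γ => (if (z, u) = e then 1 else 0) *
      (ω z + wlen w γ) + ω z * visits e γ + visits e γ * wlen w γ) (by simp [visits, edgeList])
      (fun z u γ => ?_) (fun z u hu γ hγ => ?_) z).trans_eq ?_
  · have := visits_nonneg e γ
    have := wlen_nonneg hw0 γ
    have := hω0 z
    have : 0 ≤ if (z, u) = e then (1 : ℝ) else 0 := by split_ifs <;> norm_num
    positivity
  · rw [wlen_cons_of_head? hγ, hw z u hu]
    calc visits e (z :: γ) * (ω z + wlen w γ)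
        ≤ ((if (z, u) = e then 1 else 0) + visits e γ) * (ω z + wlen w γ) :=
          mul_le_mul_of_nonneg_right (visits_cons_le_of_head? hγ z)
            (add_nonneg (hω0 z) (wlen_nonneg hw0 γ))
      _ = _ := by ring
  · simp only [upExp_add, upExp_const_mul, upExp_const_add hT hq1, add_assoc]

theorem sum_mul_upExp_visits_mul_wlen_le (hπ : IsSubinvariant T q (r ^ 2) π)
    (hπω : IsSubinvariant T q r fun x => π x * ω x) (hπ0 : ∀ x, 0 ≤ π x)
    (hT : ∀ z, ∀ u ∈ T z, π z < π u) (hq : ∀ x u, 0 ≤ q x u)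
    (hq1 : ∀ z ≠ xstar, ∑ u ∈ T z, q z u = 1) (hr0 : 0 ≤ r) (hr1 : r < 1) (hω0 : ∀ z, 0 ≤ ω z)
    (hω : ∀ z, ∀ u ∈ T z, ω u ≤ r * ω z) (hw0 : ∀ e, 0 ≤ w e)
    (hw : ∀ z, ∀ u ∈ T z, w (z, u) = ω z) (hab : b ∈ T a) :
    ∑ x, π x * upExp T xstar q (fun γ => visits (a, b) γ * wlen w γ) x ≤
      π a * q a b * ω a / (1 - r) ^ 2 := by
  set F := upExp T xstar q (visits (a, b))
  set Λ := upExp T xstar q (wlen w)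
  set G := upExp T xstar q (fun γ => visits (a, b) γ * wlen w γ)
  have h1r : 0 < 1 - r := sub_pos.mpr hr1
  have hGrec := hπ.sum_mul_le hπ0 (fun _ => upExp_nonneg hq fun γ =>
    mul_nonneg (visits_nonneg _ γ) (wlen_nonneg hw0 γ))
    (upExp_visits_mul_wlen_le_sum hT hq hq1 hω0 hw0 hw (a, b))
  have hsplit : ∑ x, π x * ∑ u ∈ T x, q x u *
      ((if (x, u) = (a, b) then 1 else 0) * (ω x + Λ u) + ω x * F u) =
      π a * q a b * (ω a + Λ b) + ∑ x, (π x * ω x) * ∑ u ∈ T x, q x u * F u := by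
    rw [← sum_mul_sum_ite_eq hab (fun z u => ω z + Λ u)]
    simp only [mul_sum, ← sum_add_distrib]
    exact sum_congr rfl fun _ _ => sum_congr rfl fun _ _ => by ring
  have hFF := hπω.sum_mul_sum_le (f := F) fun _ => upExp_nonneg hq (visits_nonneg _)
  have hFW := hπω.sum_mul_upExp_visits_le (fun x => mul_nonneg (hπ0 x) (hω0 x)) hT hq hq1 hab
  have hΛb : (1 - r) * Λ b ≤ r * ω a := by
    have := upExp_wlen_le hT hq hq1 hr1 hω0 hω hw0 hw b
    rw [le_div_iff₀ h1r] at this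
    linarith [hω a b hab]
  have hqa : 0 ≤ π a * q a b := mul_nonneg (hπ0 a) (hq a b)
  have key : (1 + r) * ((1 - r) ^ 2 * ∑ x, π x * G x) ≤ (1 + r) * (π a * q a b * ω a) := calc
    _ = (1 - r) * ((1 - r ^ 2) * ∑ x, π x * G x) := by ring
    _ ≤ (1 - r) * (π a * q a b * (ω a + Λ b) + r * ∑ x, π x * ω x * F x) := by
        gcongr; linarith
    _ = (1 - r) * (π a * q a b * ω a) + π a * q a b * ((1 - r) * Λ b) +
          r * ((1 - r) * ∑ x, π x * ω x * F x) := by ring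
    _ ≤ (1 - r) * (π a * q a b * ω a) + π a * q a b * (r * ω a) + r * (π a * ω a * q a b) := by
        gcongr
    _ = _ := by ring
  rw [le_div_iff₀ (by positivity), mul_comm]
  exact le_of_mul_le_mul_left key (by linarith)

variable (π T xstar q w) in
noncomputable def edgeLoad (e : X × X) : ℝ :=
  ∑ x, π x * upExp T xstar q (fun γ => visits e γ * wlen w γ) x +
    (∑ x, π x * upExp T xstar q (visits e) x) * ∑ x, π x * upExp T xstar q (wlen w) x

theorem edgeLoad_eq_zero (hT : ∀ z, ∀ u ∈ T z, π z < π u) {e : X × X} (he : e.2 ∉ T e.1) :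
    edgeLoad π T xstar q w e = 0 := by
  have hv {z γ} (hγ : γ ∈ upPaths T xstar z) : visits e γ = 0 :=
    if_neg fun h => he (mem_of_mem_edgeList_of_mem_upPaths hT hγ h)
  simp (disch := assumption) only [edgeLoad, upExp, hv, mul_zero, zero_mul, sum_const_zero,
    add_zero]

theorem edgeLoad_add_edgeLoad_swap (hT : ∀ z, ∀ u ∈ T z, π z < π u) {e : X × X}
    (hab : b ∈ T a) (he : e = (a, b) ∨ e = (b, a)) :
    edgeLoad π T xstar q w e + edgeLoad π T xstar q w e.swap = edgeLoad π T xstar q w (a, b) := by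
  have hba : a ∉ T b := fun h => lt_asymm (hT a b hab) (hT b a h)
  rcases he with rfl | rfl <;> simp [edgeLoad_eq_zero (e := (b, a)) hT hba]

theorem edgeLoad_le (hπ : IsSubinvariant T q (r ^ 2) π)
    (hπω : IsSubinvariant T q r fun x => π x * ω x) (hπ0 : ∀ x, 0 ≤ π x)
    (hT : ∀ z, ∀ u ∈ T z, π z < π u) (hq : ∀ x u, 0 ≤ q x u)
    (hq1 : ∀ z ≠ xstar, ∑ u ∈ T z, q z u = 1) (hr0 : 0 ≤ r) (hr1 : r < 1) (hω1 : ∀ z, 1 ≤ ω z)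
    (hω : ∀ z, ∀ u ∈ T z, ω u ≤ r * ω z) (hw0 : ∀ e, 0 ≤ w e)
    (hw : ∀ z, ∀ u ∈ T z, w (z, u) = ω z) (hmass : (1 - r) * ∑ x, π x * ω x ≤ 1)
    (hab : b ∈ T a) :
    edgeLoad π T xstar q w (a, b) ≤ 2 / (1 - r) ^ 3 * (π a * q a b * ω a) := by
  have hω0 (z : X) : 0 ≤ ω z := zero_le_one.trans (hω1 z)
  have h1r : 0 < 1 - r := sub_pos.mpr hr1
  set X' := π a * q a b * ω a
  have hX' : π a * q a b ≤ X' := le_mul_of_one_le_right (mul_nonneg (hπ0 a) (hq a b)) (hω1 a)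
  have hF : ∑ x, π x * upExp T xstar q (visits (a, b)) x ≤ X' / (1 - r) := by
    have := hπ.sum_mul_upExp_visits_le hπ0 hT hq hq1 hab
    have : 0 ≤ ∑ x, π x * upExp T xstar q (visits (a, b)) x :=
      sum_nonneg fun x _ => mul_nonneg (hπ0 x) (upExp_nonneg hq (visits_nonneg _))
    rw [le_div_iff₀ h1r]
    nlinarith [mul_nonneg this (mul_nonneg hr0 h1r.le)]
  have hΛ : ∑ x, π x * upExp T xstar q (wlen w) x ≤ 1 / (1 - r) ^ 2 := calc
    _ ≤ ∑ x, π x * (ω x / (1 - r)) := by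
        gcongr with x
        exacts [hπ0 x, upExp_wlen_le hT hq hq1 hr1 hω0 hω hw0 hw x]
    _ = (∑ x, π x * ω x) / (1 - r) := by rw [sum_div]; simp only [mul_div_assoc]
    _ ≤ 1 / (1 - r) ^ 2 := by
        rw [div_le_div_iff₀ h1r (by positivity)]; nlinarith
  have hG := sum_mul_upExp_visits_mul_wlen_le hπ hπω hπ0 hT hq hq1 hr0 hr1 hω0 hω hw0 hw hab
  have hX0 : 0 ≤ X' := mul_nonneg (mul_nonneg (hπ0 a) (hq a b)) (hω0 a)
  calc _ ≤ X' / (1 - r) ^ 3 + X' / (1 - r) * (1 / (1 - r) ^ 2) := by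
        refine add_le_add (hG.trans (div_le_div_of_nonneg_left hX0 (by positivity)
            (pow_le_pow_of_le_one h1r.le (by linarith) (by norm_num))))
          (mul_le_mul hF hΛ ?_ (div_nonneg hX0 h1r.le))
        exact sum_nonneg fun x _ => mul_nonneg (hπ0 x) (upExp_nonneg hq (wlen_nonneg hw0))
    _ = _ := by field_simp; ring

end WalkBounds

theorem tsum_subtype_sum_ite_eq {α ι : Type*} [DecidableEq α] (P : α → Prop) [DecidablePred P]
    (s : Finset ι) (κ : ι → α) (f : ι → ℝ) :
    ∑' a : {a // P a}, ∑ i ∈ s, (if κ i = a.1 then f i else 0) = ∑ i ∈ s with P (κ i), f i := by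
  have (i : ι) : HasSum (fun a : {a // P a} => if κ i = a.1 then f i else 0)
      (if P (κ i) then f i else 0) := by
    split_ifs with hP
    · convert hasSum_ite_eq (⟨κ i, hP⟩ : {a // P a}) (f i) using 2 with a
      simp [Subtype.ext_iff, eq_comm]
    · convert hasSum_zero with a
      exact if_neg fun h : κ i = a.1 => hP (h ▸ a.2)
  rw [(hasSum_sum fun i _ => this i).tsum_eq, sum_filter]

def upDownPath (g₁ g₂ : List X) : List X := g₁.dropLast ++ g₂.reverse

section Flow

variable [Fintype X] [DecidableEq X] {π : X → ℝ} {T : X → Finset X} {xstar x y : X}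
  {g₁ g₂ : List X} {q : X → X → ℝ} {w : X × X → ℝ} {E : Finset (X × X)}

theorem edgeList_upDownPath (hT : ∀ z, ∀ u ∈ T z, π z < π u) (h₁ : g₁ ∈ upPaths T xstar x)
    (h₂ : g₂ ∈ upPaths T xstar y) :
    edgeList (upDownPath g₁ g₂) = edgeList g₁ ++ edgeList g₂.reverse := by
  obtain ⟨t, ht⟩ : ∃ t, g₂.reverse = xstar :: t := by
    have h := getLast?_of_mem_upPaths hT h₂
    rw [← List.head?_reverse] at h
    cases hr : g₂.reverse with
    | nil => simp [hr] at h
    | cons c t => rw [hr] at h; cases h; exact ⟨t, rfl⟩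
  rw [upDownPath, ht, edgeList_append_cons, dropLast_append_of_mem_upPaths hT h₁]

theorem head?_upDownPath (hT : ∀ z, ∀ u ∈ T z, π z < π u) (h₁ : g₁ ∈ upPaths T xstar x)
    (h₂ : g₂ ∈ upPaths T xstar y) : (upDownPath g₁ g₂).head? = some x := by
  have h := head?_of_mem_upPaths hT h₁
  rw [← dropLast_append_of_mem_upPaths hT h₁, List.head?_append] at h
  rwa [upDownPath, List.head?_append, List.head?_reverse, getLast?_of_mem_upPaths hT h₂]

theorem getLast?_upDownPath (hT : ∀ z, ∀ u ∈ T z, π z < π u) (h₂ : g₂ ∈ upPaths T xstar y) :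
    (upDownPath g₁ g₂).getLast? = some y := by
  rw [upDownPath, List.getLast?_append, List.getLast?_reverse, head?_of_mem_upPaths hT h₂]
  rfl

theorem isPathIn_upDownPath (hT : ∀ z, ∀ u ∈ T z, π z < π u)
    (hE : ∀ z, ∀ u ∈ T z, (z, u) ∈ E ∧ (u, z) ∈ E) (h₁ : g₁ ∈ upPaths T xstar x)
    (h₂ : g₂ ∈ upPaths T xstar y) (hxy : x ≠ y) : IsPathIn E x y (upDownPath g₁ g₂) := by
  have up₁ {e} (he : e ∈ edgeList g₁) := mem_of_mem_edgeList_of_mem_upPaths hT h₁ he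
  have up₂ {e : X × X} (he : e ∈ edgeList g₂.reverse) :=
    mem_of_mem_edgeList_of_mem_upPaths hT h₂ (mem_edgeList_reverse.mp he)
  refine ⟨hxy, head?_upDownPath hT h₁ h₂, getLast?_upDownPath hT h₂, fun e he => ?_, ?_⟩
  · rw [edgeList_upDownPath hT h₁ h₂, List.mem_append] at he
    exact he.elim (fun he => (hE _ _ (up₁ he)).1) fun he => (hE _ _ (up₂ he)).2
  · rw [edgeList_upDownPath hT h₁ h₂, List.nodup_append]
    refine ⟨nodup_edgeList (nodup_of_mem_upPaths hT h₁),
      nodup_edgeList (List.nodup_reverse.mpr (nodup_of_mem_upPaths hT h₂)), ?_⟩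
    rintro e he₁ _ he₂ rfl
    exact lt_asymm (hT _ _ (up₁ he₁)) (hT _ _ (up₂ he₂))

theorem visits_upDownPath_le (hT : ∀ z, ∀ u ∈ T z, π z < π u) (h₁ : g₁ ∈ upPaths T xstar x)
    (h₂ : g₂ ∈ upPaths T xstar y) (e : X × X) :
    visits e (upDownPath g₁ g₂) ≤ visits e g₁ + visits e.swap g₂ := by
  simp only [visits, edgeList_upDownPath hT h₁ h₂, List.mem_append, mem_edgeList_reverse]
  split_ifs <;> simp_all

theorem wlen_upDownPath (hT : ∀ z, ∀ u ∈ T z, π z < π u) (hw : ∀ e, w e.swap = w e)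
    (h₁ : g₁ ∈ upPaths T xstar x) (h₂ : g₂ ∈ upPaths T xstar y) :
    wlen w (upDownPath g₁ g₂) = wlen w g₁ + wlen w g₂ := by
  rw [← wlen_reverse hw g₂, wlen, edgeList_upDownPath hT h₁ h₂, List.map_append, List.sum_append]
  rfl

end Flow

def flowMass (π : X → ℝ) (q : X → X → ℝ) (σ : (_ : X × X) × List X × List X) : ℝ :=
  π σ.1.1 * π σ.1.2 * (pathProb q σ.2.1 * pathProb q σ.2.2)

theorem flowMass_nonneg {π : X → ℝ} {q : X → X → ℝ} (hπ0 : ∀ x, 0 ≤ π x) (hq : ∀ x u, 0 ≤ q x u)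
    (σ : (_ : X × X) × List X × List X) : 0 ≤ flowMass π q σ :=
  mul_nonneg (mul_nonneg (hπ0 _) (hπ0 _))
    (mul_nonneg (pathProb_nonneg hq _) (pathProb_nonneg hq _))

section UpDownFlow

variable [Fintype X] [DecidableEq X] {π : X → ℝ} {T : X → Finset X} {xstar x y : X}
  {q : X → X → ℝ} {w : X × X → ℝ} {E : Finset (X × X)}

variable (T xstar) in
noncomputable def flowIndex : Finset ((_ : X × X) × List X × List X) :=
  univ.sigma fun p => upPaths T xstar p.1 ×ˢ upPaths T xstar p.2

/-- The terms with `x = y` are closed walks, which are not paths: they are invisible to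
`flowBetween` and to `congestion`. -/
noncomputable def upDownFlow (π : X → ℝ) (T : X → Finset X) (xstar : X) (q : X → X → ℝ)
    (γ : List X) : ℝ :=
  ∑ σ ∈ flowIndex T xstar, if upDownPath σ.2.1 σ.2.2 = γ then flowMass π q σ else 0

theorem upDownFlow_nonneg (hπ0 : ∀ x, 0 ≤ π x) (hq : ∀ x u, 0 ≤ q x u) (γ : List X) :
    0 ≤ upDownFlow π T xstar q γ :=
  sum_nonneg fun σ _ => by split_ifs; exacts [flowMass_nonneg hπ0 hq σ, le_rfl]

theorem sum_flowIndex_mul (h₁ h₂ : List X → ℝ) :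
    ∑ σ ∈ flowIndex T xstar, flowMass π q σ * (h₁ σ.2.1 * h₂ σ.2.2) =
      (∑ x, π x * upExp T xstar q h₁ x) * ∑ y, π y * upExp T xstar q h₂ y := by
  rw [flowIndex, sum_sigma, sum_mul_sum, ← univ_product_univ, sum_product]
  refine sum_congr rfl fun x _ => sum_congr rfl fun y _ => ?_
  rw [sum_product, upExp, upExp, mul_sum, mul_sum, sum_mul_sum]
  exact sum_congr rfl fun _ _ => sum_congr rfl fun _ _ => by simp only [flowMass]; ring

theorem flowBetween_upDownFlow (hT : ∀ z, ∀ u ∈ T z, π z < π u)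
    (hE : ∀ z, ∀ u ∈ T z, (z, u) ∈ E ∧ (u, z) ∈ E) (hq1 : ∀ z ≠ xstar, ∑ u ∈ T z, q z u = 1)
    (hxy : x ≠ y) : flowBetween E (upDownFlow π T xstar q) x y = π x * π y := by
  classical
  have hpaths : (flowIndex T xstar).filter (fun σ => IsPathIn E x y (upDownPath σ.2.1 σ.2.2)) =
      ({(x, y)} : Finset (X × X)).sigma fun p => upPaths T xstar p.1 ×ˢ upPaths T xstar p.2 := by
    ext ⟨⟨x', y'⟩, g₁, g₂⟩
    simp only [flowIndex, mem_filter, mem_sigma, mem_univ, true_and, mem_product, mem_singleton,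
      Prod.mk.injEq]
    constructor
    · rintro ⟨⟨h₁, h₂⟩, -, hx, hy, -⟩
      rw [head?_upDownPath hT h₁ h₂, Option.some_inj] at hx
      rw [getLast?_upDownPath hT h₂, Option.some_inj] at hy
      exact ⟨⟨hx, hy⟩, h₁, h₂⟩
    · rintro ⟨⟨rfl, rfl⟩, h₁, h₂⟩
      exact ⟨⟨h₁, h₂⟩, isPathIn_upDownPath hT hE h₁ h₂ hxy⟩
  have hprob (z : X) : ∑ g ∈ upPaths T xstar z, pathProb q g = 1 := by
    simpa [upExp] using upExp_one hT hq1 z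
  simp only [flowBetween, upDownFlow]
  rw [tsum_subtype_sum_ite_eq _ _ fun σ : (_ : X × X) × List X × List X => upDownPath σ.2.1 σ.2.2,
    hpaths, sum_sigma, sum_singleton, sum_product]
  simp only [flowMass, ← mul_sum, hprob, mul_one]

theorem sum_flowIndex_mul_visits_mul_wlen (hT : ∀ z, ∀ u ∈ T z, π z < π u)
    (hq1 : ∀ z ≠ xstar, ∑ u ∈ T z, q z u = 1) (hπ1 : ∑ x, π x = 1) (e : X × X) :
    ∑ σ ∈ flowIndex T xstar, flowMass π q σ *
        ((visits e σ.2.1 + visits e.swap σ.2.2) * (wlen w σ.2.1 + wlen w σ.2.2)) =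
      edgeLoad π T xstar q w e + edgeLoad π T xstar q w e.swap := by
  set v₁ := visits e
  set v₂ := visits e.swap
  have hone : ∑ x, π x * upExp T xstar q (fun _ => 1) x = 1 := by
    simp [upExp_one hT hq1, hπ1]
  calc _ = ∑ σ ∈ flowIndex T xstar, (flowMass π q σ * ((v₁ σ.2.1 * wlen w σ.2.1) * 1) +
          flowMass π q σ * (v₁ σ.2.1 * wlen w σ.2.2) +
          flowMass π q σ * (wlen w σ.2.1 * v₂ σ.2.2) +
          flowMass π q σ * (1 * (v₂ σ.2.2 * wlen w σ.2.2))) :=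
        sum_congr rfl fun _ _ => by ring
    _ = _ := by
        rw [sum_add_distrib, sum_add_distrib, sum_add_distrib,
          sum_flowIndex_mul (fun g => v₁ g * wlen w g) (fun _ => 1), sum_flowIndex_mul v₁ (wlen w),
          sum_flowIndex_mul (wlen w) v₂, sum_flowIndex_mul (fun _ => 1) (fun g => v₂ g * wlen w g),
          hone, edgeLoad, edgeLoad]
        ring

theorem tsum_wlen_mul_upDownFlow_le (hT : ∀ z, ∀ u ∈ T z, π z < π u) (hq : ∀ x u, 0 ≤ q x u)
    (hq1 : ∀ z ≠ xstar, ∑ u ∈ T z, q z u = 1) (hπ0 : ∀ x, 0 ≤ π x) (hπ1 : ∑ x, π x = 1)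
    (hw0 : ∀ e, 0 ≤ w e) (hw : ∀ e, w e.swap = w e) (e : X × X) :
    ∑' γ : {γ : List X // (∃ x y, IsPathIn E x y γ) ∧ e ∈ edgeList γ},
        wlen w γ * upDownFlow π T xstar q γ ≤
      edgeLoad π T xstar q w e + edgeLoad π T xstar q w e.swap := by
  classical
  rw [← sum_flowIndex_mul_visits_mul_wlen hT hq1 hπ1]
  calc _ = ∑' γ : {γ : List X // (∃ x y, IsPathIn E x y γ) ∧ e ∈ edgeList γ},
        ∑ σ ∈ flowIndex T xstar, if upDownPath σ.2.1 σ.2.2 = γ.1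
          then wlen w (upDownPath σ.2.1 σ.2.2) * flowMass π q σ else 0 := by
        refine tsum_congr fun γ => ?_
        rw [upDownFlow, mul_sum]
        exact sum_congr rfl fun σ _ => by split_ifs with h <;> simp [h]
    _ ≤ _ := by
        rw [tsum_subtype_sum_ite_eq _ _
          (fun σ : (_ : X × X) × List X × List X => upDownPath σ.2.1 σ.2.2), sum_filter]
        refine sum_le_sum fun σ hσ => ?_
        simp only [flowIndex, mem_sigma, mem_product, mem_univ, true_and] at hσ
        have hm := flowMass_nonneg hπ0 hq σ
        have hl := add_nonneg (wlen_nonneg hw0 σ.2.1) (wlen_nonneg hw0 σ.2.2)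
        split_ifs with hpath
        · have hv := visits_upDownPath_le hT hσ.1 hσ.2 e
          rw [visits, if_pos hpath.2] at hv
          rw [wlen_upDownPath hT hw hσ.1 hσ.2]
          nlinarith [mul_le_mul_of_nonneg_right hv (mul_nonneg hl hm)]
        · exact mul_nonneg hm (mul_nonneg (add_nonneg (visits_nonneg _ _) (visits_nonneg _ _)) hl)

end UpDownFlow

noncomputable def decayRate (ρ : ℝ) : ℝ := ρ ^ (-(2 : ℝ)⁻¹)

noncomputable def weightExponent (S ρ : ℝ) : ℝ := Real.logb S ρ / 2

section Exponents

variable {ρ S : ℝ}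

theorem decayRate_pos (hρ : 0 < ρ) : 0 < decayRate ρ := Real.rpow_pos_of_pos hρ _

theorem decayRate_lt_one (hρ : 1 < ρ) : decayRate ρ < 1 :=
  Real.rpow_lt_one_of_one_lt_of_neg hρ (by norm_num)

theorem decayRate_sq (hρ : 0 < ρ) : decayRate ρ ^ 2 = ρ⁻¹ := by
  rw [decayRate, ← Real.rpow_natCast, ← Real.rpow_mul hρ.le]
  norm_num [Real.rpow_neg_one]

theorem cFun_eq (ρ : ℝ) : cFun ρ = 4 / (1 - decayRate ρ) ^ 3 := rfl

theorem rpow_neg_weightExponent (hS : 1 < S) (hρ : 0 < ρ) :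
    S ^ (-weightExponent S ρ) = decayRate ρ := by
  rw [show -weightExponent S ρ = Real.logb S ρ * -(2 : ℝ)⁻¹ by rw [weightExponent]; ring,
    Real.rpow_mul (by linarith), Real.rpow_logb (by linarith) hS.ne' hρ, decayRate]

theorem cFun_nonneg (hρ : ρ = 0 ∨ 1 ≤ ρ) : 0 ≤ cFun ρ := by
  rw [cFun_eq]
  rcases hρ with rfl | hρ
  · norm_num [decayRate]
  · have : decayRate ρ ≤ 1 := Real.rpow_le_one_of_one_le_of_nonpos hρ (by norm_num)
    have : 0 ≤ 1 - decayRate ρ := by linarith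
    positivity

theorem weightExponent_nonneg (hS : 1 < S) (hρ : 1 ≤ ρ) : 0 ≤ weightExponent S ρ :=
  div_nonneg (Real.logb_nonneg hS hρ) zero_le_two

theorem weightExponent_le_one (hS : 1 < S) (hρ : 0 < ρ) (hρS : ρ ≤ S) :
    weightExponent S ρ ≤ 1 := by
  have := Real.logb_le_logb_of_le hS hρ hρS
  rw [Real.logb_self_eq_one hS] at this
  rw [weightExponent]; linarith

theorem mul_inv_rpow_one_sub_weightExponent {M : ℝ} (hM : 1 ≤ M) (hMS : M < S) :
    M * (S ^ (1 - weightExponent S (S / M)))⁻¹ = decayRate (S / M) := by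
  have hS : 1 < S := hM.trans_lt hMS
  have hρ : 0 < S / M := div_pos (by linarith) (by linarith)
  have hr := decayRate_pos hρ
  have hr2 := decayRate_sq hρ
  rw [inv_div] at hr2
  rw [sub_eq_add_neg, Real.rpow_add (by linarith), Real.rpow_one, rpow_neg_weightExponent hS hρ]
  field_simp
  rw [hr2]
  field_simp

theorem mul_rpow_neg_le_one {x β : ℝ} (hx : 0 < x) (hx1 : x ≤ 1) (hβ : β ≤ 1) :
    x * x ^ (-β) ≤ 1 := calc
  x * x ^ (-β) ≤ x * x ^ (-(1 : ℝ)) :=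
    mul_le_mul_of_nonneg_left (Real.rpow_le_rpow_of_exponent_ge hx hx1 (by linarith)) hx.le
  _ = 1 := by rw [Real.rpow_neg_one, mul_inv_cancel₀ hx.ne']

end Exponents

section Neighbourhoods

variable [Fintype X] {π ρ : X → ℝ} {N : X → Finset X} {S c β : ℝ} {P : Matrix X X ℝ}
  {q : X → X → ℝ} {xstar z u : X}

theorem card_le_Mmax (N : X → Finset X) (u : X) : ((N u).card : ℝ) ≤ Mmax N :=
  Nat.cast_le.mpr (le_sup (f := fun x => (N x).card) (mem_univ u))

-- `Mmax N = 0` makes `S / Mmax N = 0`, where `decayRate 0 = 0`.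
theorem cFun_div_Mmax_nonneg (hMS : (Mmax N : ℝ) < S) : 0 ≤ cFun (S / Mmax N) := by
  refine cFun_nonneg ?_
  rcases (Mmax N).eq_zero_or_pos with h | h
  · left; simp [h]
  · right; rw [le_div_iff₀ (by exact_mod_cast h), one_mul]; exact hMS.le

theorem mul_le_of_mem_NS (hπ : ∀ x, 0 < π x) (h : u ∈ NS π N S z) : S * π z ≤ π u :=
  (le_div_iff₀ (hπ z)).mp (mem_filter.mp h).2

theorem one_le_Mmax_of_mem_NS (h : u ∈ NS π N S z) : 1 ≤ (Mmax N : ℝ) :=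
  le_trans (by exact_mod_cast card_pos.mpr ⟨u, (mem_filter.mp h).1⟩) (card_le_Mmax N z)

theorem lt_of_mem_NS (hπ : ∀ x, 0 < π x) (hMS : (Mmax N : ℝ) < S) (h : u ∈ NS π N S z) :
    π z < π u := by
  have hS : 1 < S := (one_le_Mmax_of_mem_NS h).trans_lt hMS
  nlinarith [mul_le_of_mem_NS hπ h, hπ z]

theorem NS_eq_empty_of_isMax (hπ : ∀ x, 0 < π x) (hMS : (Mmax N : ℝ) < S)
    (hxstar : ∀ x, π x ≤ π xstar) : NS π N S xstar = ∅ :=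
  eq_empty_of_forall_notMem fun u hu => (hxstar u).not_gt (lt_of_mem_NS hπ hMS hu)

theorem NS_nonempty (hS : 0 < S) (hSR : S ≤ Rval π N xstar) (hz : z ≠ xstar) :
    (NS π N S z).Nonempty := by
  set ratios := (fun y => π y / π z) '' (N z : Set X)
  have hle : S ≤ sSup ratios :=
    hSR.trans <| csInf_le ((Set.toFinite _).image _).bddBelow ⟨z, hz, rfl⟩
  have hne : ratios.Nonempty := by
    by_contra h
    rw [Set.not_nonempty_iff_eq_empty.mp h, Real.sSup_empty] at hle
    exact hle.not_gt hS
  obtain ⟨y, hy, hyS⟩ := hne.csSup_mem ((Set.toFinite _).image _)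
  exact ⟨y, mem_filter.mpr ⟨hy, hle.trans_eq hyS.symm⟩⟩

theorem rpow_neg_le_of_mem_NS (hπ : ∀ x, 0 < π x) (hS : 0 < S) (hβ : 0 ≤ β)
    (h : u ∈ NS π N S z) : π u ^ (-β) ≤ S ^ (-β) * π z ^ (-β) :=
  (Real.rpow_le_rpow_of_nonpos (mul_pos hS (hπ z)) (mul_le_of_mem_NS hπ h)
    (neg_nonpos.mpr hβ)).trans_eq (Real.mul_rpow hS.le (hπ z).le)

theorem mul_rpow_neg_le_of_mem_NS (hπ : ∀ x, 0 < π x) (hS : 0 < S) (hβ : β ≤ 1)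
    (h : u ∈ NS π N S z) :
    π z * π z ^ (-β) ≤ (S ^ (1 - β))⁻¹ * (π u * π u ^ (-β)) := by
  have hpow (x : ℝ) (hx : 0 < x) : x * x ^ (-β) = x ^ (1 - β) := by
    rw [sub_eq_add_neg, Real.rpow_add hx, Real.rpow_one]
  rw [hpow _ (hπ z), hpow _ (hπ u), ← Real.inv_rpow hS.le, ← Real.mul_rpow (by positivity)
    (hπ u).le]
  refine Real.rpow_le_rpow (hπ z).le ?_ (by linarith)
  rw [inv_mul_eq_div, le_div_iff₀ hS, mul_comm]
  exact mul_le_of_mem_NS hπ h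

variable [DecidableEq X]

theorem isSubinvariant_NS (hNsym : ∀ x y, y ∈ N x → x ∈ N y) (hq1 : ∀ x u, q x u ≤ 1)
    (hρ0 : ∀ x, 0 ≤ ρ x) (hc : 0 ≤ c)
    (hρ : ∀ x, ∀ u ∈ NS π N S x, ρ x ≤ c * ρ u) : IsSubinvariant (NS π N S) q (Mmax N * c) ρ := by
  intro u
  have hsub : univ.filter (u ∈ NS π N S ·) ⊆ N u := fun x hx =>
    hNsym x u (mem_filter.mp (mem_filter.mp hx).2).1
  calc ∑ x ∈ univ.filter (u ∈ NS π N S ·), ρ x * q x u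
      ≤ ∑ x ∈ univ.filter (u ∈ NS π N S ·), c * ρ u := sum_le_sum fun x hx =>
        (mul_le_of_le_one_right (hρ0 x) (hq1 x u)).trans (hρ x u (mem_filter.mp hx).2)
    _ ≤ (N u).card * (c * ρ u) := by
        rw [sum_const, nsmul_eq_mul]
        exact mul_le_mul_of_nonneg_right (by exact_mod_cast card_le_card hsub)
          (mul_nonneg hc (hρ0 u))
    _ ≤ Mmax N * c * ρ u := by
        rw [mul_assoc]
        exact mul_le_mul_of_nonneg_right (card_le_Mmax N u) (mul_nonneg hc (hρ0 u))

variable (π N S P) in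
noncomputable def upKernel (x u : X) : ℝ :=
  if u ∈ NS π N S x then P x u / ∑ v ∈ NS π N S x, P x v else 0

theorem upKernel_nonneg (hP : ∀ x y, 0 ≤ P x y) (x u : X) : 0 ≤ upKernel π N S P x u := by
  unfold upKernel; split_ifs
  exacts [div_nonneg (hP x u) (sum_nonneg fun v _ => hP x v), le_rfl]

theorem upKernel_le_one (hP : ∀ x y, 0 ≤ P x y) (x u : X) : upKernel π N S P x u ≤ 1 := by
  unfold upKernel; split_ifs with hu
  exacts [div_le_one_of_le₀ (single_le_sum (fun v _ => hP x v) hu) (sum_nonneg fun v _ => hP x v),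
    zero_le_one]

theorem sum_upKernel (hP : ∀ u ∈ N z, 0 < P z u) (hne : (NS π N S z).Nonempty) :
    ∑ u ∈ NS π N S z, upKernel π N S P z u = 1 := by
  have hpos : 0 < ∑ v ∈ NS π N S z, P z v := sum_pos (fun u hu => hP u (mem_filter.mp hu).1) hne
  calc _ = ∑ u ∈ NS π N S z, P z u / ∑ v ∈ NS π N S z, P z v := sum_congr rfl fun u hu => if_pos hu
    _ = 1 := by rw [← sum_div, div_self hpos.ne']

theorem isSubinvariant_upKernel (hπ : ∀ x, 0 < π x) (hNsym : ∀ x y, y ∈ N x → x ∈ N y)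
    (hP : ∀ x y, 0 ≤ P x y) (hS : 0 < S) :
    IsSubinvariant (NS π N S) (upKernel π N S P) (Mmax N * S⁻¹) π :=
  isSubinvariant_NS hNsym (upKernel_le_one hP) (fun x => (hπ x).le) (inv_nonneg.mpr hS.le)
    fun x u hu => by
      rw [inv_mul_eq_div, le_div_iff₀ hS, mul_comm]
      exact mul_le_of_mem_NS hπ hu

theorem isSubinvariant_upKernel_mul_rpow (hπ : ∀ x, 0 < π x) (hNsym : ∀ x y, y ∈ N x → x ∈ N y)
    (hP : ∀ x y, 0 ≤ P x y) (hS : 0 < S) (hβ : β ≤ 1) :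
    IsSubinvariant (NS π N S) (upKernel π N S P) (Mmax N * (S ^ (1 - β))⁻¹)
      fun x => π x * π x ^ (-β) :=
  isSubinvariant_NS hNsym (upKernel_le_one hP)
    (fun x => mul_nonneg (hπ x).le (Real.rpow_nonneg (hπ x).le _)) (by positivity)
    fun _ _ hu => mul_rpow_neg_le_of_mem_NS hπ hS hβ hu

end Neighbourhoods

noncomputable def edgeWeight (π : X → ℝ) (β : ℝ) (e : X × X) : ℝ := min (π e.1) (π e.2) ^ (-β)

theorem edgeWeight_pos {π : X → ℝ} (hπ : ∀ x, 0 < π x) (β : ℝ) (e : X × X) :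
    0 < edgeWeight π β e :=
  Real.rpow_pos_of_pos (lt_min (hπ _) (hπ _)) _

theorem edgeWeight_of_lt {π : X → ℝ} {β : ℝ} {z u : X} (h : π z < π u) :
    edgeWeight π β (z, u) = π z ^ (-β) := by
  rw [edgeWeight, min_eq_left h.le]

section Congestion

variable [Fintype X] [DecidableEq X] {π : X → ℝ} {N : X → Finset X} {S : ℝ}
  {P : Matrix X X ℝ} {xstar z u a b : X} {e : X × X}

theorem mem_ES_of_mem_NS (h : u ∈ NS π N S z) : (z, u) ∈ ES π N S ∧ (u, z) ∈ ES π N S := by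
  simp [ES, h]

theorem edgeLoad_upKernel_le (hπ : ∀ x, 0 < π x) (hπ1 : ∑ x, π x = 1)
    (hxstar : ∀ x, π x ≤ π xstar) (hNsym : ∀ x y, y ∈ N x → x ∈ N y) (hP : ∀ x y, 0 ≤ P x y)
    (hPpos : ∀ x, ∀ u ∈ N x, 0 < P x u) (hNS : ∀ z ≠ xstar, (NS π N S z).Nonempty)
    (hM : 1 ≤ (Mmax N : ℝ)) (hMS : (Mmax N : ℝ) < S) (hab : b ∈ NS π N S a) :
    edgeLoad π (NS π N S) xstar (upKernel π N S P)
        (edgeWeight π (weightExponent S (S / Mmax N))) (a, b) ≤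
      cFun (S / Mmax N) / 2 *
        (π a * upKernel π N S P a b * π a ^ (-weightExponent S (S / Mmax N))) := by
  have hS1 : 1 < S := hM.trans_lt hMS
  have hρ : 1 < S / Mmax N := (one_lt_div (by linarith)).mpr hMS
  have hβ0 := weightExponent_nonneg hS1 hρ.le
  have hβ1 := weightExponent_le_one hS1 (by linarith) (div_le_self (by linarith) hM)
  have hSβ := rpow_neg_weightExponent hS1 (zero_lt_one.trans hρ)
  have hS0 : 0 < S := zero_lt_one.trans hS1
  have hπsub := isSubinvariant_upKernel hπ hNsym hP (P := P) hS0
  rw [← div_eq_mul_inv, ← inv_div, ← decayRate_sq (by linarith)] at hπsub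
  have hπωsub := isSubinvariant_upKernel_mul_rpow hπ hNsym hP (P := P) hS0 hβ1
  rw [mul_inv_rpow_one_sub_weightExponent hM hMS] at hπωsub
  have hT (z u) (hu : u ∈ NS π N S z) : π z < π u := lt_of_mem_NS hπ hMS hu
  have hπle (x : X) : π x ≤ 1 := hπ1 ▸ single_le_sum (fun y _ => (hπ y).le) (mem_univ x)
  have hq1 (z) (hz : z ≠ xstar) : ∑ u ∈ NS π N S z, upKernel π N S P z u = 1 :=
    sum_upKernel (hPpos z) (hNS z hz)
  refine (edgeLoad_le hπsub hπωsub (fun x => (hπ x).le) hT (upKernel_nonneg hP) hq1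
    (decayRate_pos (by linarith)).le (decayRate_lt_one hρ)
    (fun z => Real.one_le_rpow_of_pos_of_le_one_of_nonpos (hπ z) (hπle z) (neg_nonpos.mpr hβ0))
    (fun z u hu => ?_) (fun e => (edgeWeight_pos hπ _ e).le)
    (fun z u hu => edgeWeight_of_lt (hT z u hu))
    ((hπωsub.sum_le hq1 (NS_eq_empty_of_isMax hπ hMS hxstar)).trans
      (mul_rpow_neg_le_one (hπ xstar) (hπle xstar) hβ1)) hab).trans_eq (by rw [cFun_eq]; ring)
  rw [← hSβ]
  exact rpow_neg_le_of_mem_NS hπ hS0 hβ0 hu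

theorem exists_mem_NS_of_mem_ES (he : e ∈ ES π N S) :
    ∃ a b, b ∈ NS π N S a ∧ (e = (a, b) ∨ e = (b, a)) := by
  rcases (mem_filter.mp he).2 with h | h
  exacts [⟨e.2, e.1, h, Or.inr rfl⟩, ⟨e.1, e.2, h, Or.inl rfl⟩]

theorem upKernel_le_iSup_mul (hP : ∀ x y, 0 ≤ P x y) (hMS : (Mmax N : ℝ) < S)
    (hπ : ∀ x, 0 < π x) (hxstar : ∀ x, π x ≤ π xstar) (hab : b ∈ NS π N S a) :
    upKernel π N S P a b ≤
      (⨆ z : {z : X // z ≠ xstar}, (∑ u ∈ NS π N S z.1, P z.1 u)⁻¹) * P a b := by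
  have ha : a ≠ xstar := by
    rintro rfl
    simp [NS_eq_empty_of_isMax hπ hMS hxstar] at hab
  rw [upKernel, if_pos hab, div_eq_inv_mul]
  exact mul_le_mul_of_nonneg_right
    (le_ciSup (f := fun z : {z : X // z ≠ xstar} => (∑ u ∈ NS π N S z.1, P z.1 u)⁻¹)
      (Set.finite_range _).bddAbove ⟨a, ha⟩) (hP a b)

theorem congestion_upDownFlow_le (hπ : ∀ x, 0 < π x) (hπ1 : ∑ x, π x = 1)
    (hxstar : ∀ x, π x ≤ π xstar) (hNsym : ∀ x y, y ∈ N x → x ∈ N y) (hP : ∀ x y, 0 ≤ P x y)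
    (hPpos : ∀ x, ∀ u ∈ N x, 0 < P x u) (hrev : ∀ x y, π x * P x y = π y * P y x)
    (hNS : ∀ z ≠ xstar, (NS π N S z).Nonempty) (hMS : (Mmax N : ℝ) < S) :
    congestion π P (ES π N S) (edgeWeight π (weightExponent S (S / Mmax N)))
        (upDownFlow π (NS π N S) xstar (upKernel π N S P)) ≤
      cFun (S / Mmax N) / 2 * ⨆ z : {z : X // z ≠ xstar}, (∑ u ∈ NS π N S z.1, P z.1 u)⁻¹ := by
  set β := weightExponent S (S / Mmax N)
  set D := ⨆ z : {z : X // z ≠ xstar}, (∑ u ∈ NS π N S z.1, P z.1 u)⁻¹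
  have hT (z u) (hu : u ∈ NS π N S z) : π z < π u := lt_of_mem_NS hπ hMS hu
  have hB : 0 ≤ cFun (S / Mmax N) / 2 * D :=
    mul_nonneg (div_nonneg (cFun_div_Mmax_nonneg hMS) zero_le_two)
      (Real.iSup_nonneg fun z => inv_nonneg.mpr (sum_nonneg fun u _ => hP _ _))
  refine Real.iSup_le (fun e => Real.iSup_le (fun he => ?_) hB) hB
  obtain ⟨a, b, hab, hor⟩ := exists_mem_NS_of_mem_ES he
  have hden : π e.1 * P e.1 e.2 * edgeWeight π β e = π a * P a b * π a ^ (-β) := by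
    rcases hor with rfl | rfl
    · rw [edgeWeight_of_lt (hT a b hab)]
    · rw [← hrev, ← edgeWeight_of_lt (hT a b hab), edgeWeight, edgeWeight, min_comm]
  have hload := (tsum_wlen_mul_upDownFlow_le (E := ES π N S) hT (upKernel_nonneg hP)
    (fun z hz => sum_upKernel (hPpos z) (hNS z hz)) (fun x => (hπ x).le) hπ1
    (fun e => (edgeWeight_pos hπ β e).le)
    (fun e => by simp only [edgeWeight, Prod.fst_swap, Prod.snd_swap, min_comm]) e).trans_eq
    (edgeLoad_add_edgeLoad_swap hT hab hor)
  rw [hden, div_le_iff₀ (mul_pos (mul_pos (hπ a) (hPpos a b (mem_filter.mp hab).1))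
    (Real.rpow_pos_of_pos (hπ a) _))]
  calc _ ≤ _ := hload
    _ ≤ cFun (S / Mmax N) / 2 * (π a * upKernel π N S P a b * π a ^ (-β)) :=
      edgeLoad_upKernel_le hπ hπ1 hxstar hNsym hP hPpos hNS (one_le_Mmax_of_mem_NS hab) hMS hab
    _ ≤ cFun (S / Mmax N) / 2 * (π a * (D * P a b) * π a ^ (-β)) := by
      have := cFun_div_Mmax_nonneg hMS
      have := hπ a
      gcongr
      exact upKernel_le_iSup_mul hP hMS hπ hxstar hab
    _ = _ := by ring

end Congestion

end

theorem stmt11_general {X : Type*} [Fintype X] [DecidableEq X]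
    (π : X → ℝ) (hπpos : ∀ x, 0 < π x) (hπsum : ∑ x, π x = 1)
    (N : X → Finset X)
    (hNsym : ∀ x y, y ∈ N x → x ∈ N y)
    (xstar : X) (hxstar : ∀ x, π x ≤ π xstar)
    (P : Matrix X X ℝ) (hPnn : ∀ x y, 0 ≤ P x y)
    (hrev : ∀ x y, π x * P x y = π y * P y x)
    (hsupp : ∀ x y : X, (y ≠ x ∧ 0 < P x y) ↔ y ∈ N x)
    (S : ℝ) (hS1 : (Mmax N : ℝ) < S) (hSR : S ≤ Rval π N xstar) :
    ∃ (w : X × X → ℝ) (φ : List X → ℝ),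
      (∀ e ∈ ES π N S, 0 < w e) ∧ (∀ γ, 0 ≤ φ γ) ∧
      (∀ x y : X, x ≠ y → flowBetween (ES π N S) φ x y = π x * π y) ∧
      congestion π P (ES π N S) w φ ≤
        cFun (S / (Mmax N : ℝ)) / 2 *
          ⨆ z : {z : X // z ≠ xstar}, (∑ u ∈ NS π N S z.1, P z.1 u)⁻¹ := by
  have hPpos (x : X) (u : X) (hu : u ∈ N x) : 0 < P x u := ((hsupp x u).mpr hu).2
  have hNS (z : X) (hz : z ≠ xstar) : (NS π N S z).Nonempty :=
    NS_nonempty ((Nat.cast_nonneg _).trans_lt hS1) hSR hz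
  refine ⟨edgeWeight π (weightExponent S (S / Mmax N)),
    upDownFlow π (NS π N S) xstar (upKernel π N S P), fun e _ => edgeWeight_pos hπpos _ e,
    upDownFlow_nonneg (fun x => (hπpos x).le) (upKernel_nonneg hPnn), fun x y hxy => ?_,
    congestion_upDownFlow_le hπpos hπsum hxstar hNsym hPnn hPpos hrev hNS hS1⟩
  exact flowBetween_upDownFlow (fun z u hu => lt_of_mem_NS hπpos hS1 hu)
    (fun z u hu => mem_ES_of_mem_NS hu)
    (fun z hz => sum_upKernel (hPpos z) (hNS z hz)) hxy

theorem stmt11 {X : Type*} [Fintype X] [DecidableEq X]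
    (π : X → ℝ) (hπpos : ∀ x, 0 < π x) (hπsum : ∑ x, π x = 1)
    (N : X → Finset X)
    (hNirr : ∀ x, x ∉ N x)
    (hNsym : ∀ x y, y ∈ N x → x ∈ N y)
    (hNconn : ∀ x y : X, Relation.ReflTransGen (fun a b => b ∈ N a) x y)
    (xstar : X) (hxstar : ∀ x, π x ≤ π xstar)
    (P : Matrix X X ℝ) (hProw : ∀ x, ∑ y, P x y = 1) (hPnn : ∀ x y, 0 ≤ P x y)
    (hrev : ∀ x y, π x * P x y = π y * P y x)
    (hsupp : ∀ x y : X, (y ≠ x ∧ 0 < P x y) ↔ y ∈ N x)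
    (hRM : (Mmax N : ℝ) < Rval π N xstar)
    (S : ℝ) (hS1 : (Mmax N : ℝ) < S) (hSR : S ≤ Rval π N xstar) :
    ∃ (w : X × X → ℝ) (φ : List X → ℝ),
      (∀ e ∈ ES π N S, 0 < w e) ∧ (∀ γ, 0 ≤ φ γ) ∧
      (∀ x y : X, x ≠ y → flowBetween (ES π N S) φ x y = π x * π y) ∧
      congestion π P (ES π N S) w φ ≤
        cFun (S / (Mmax N : ℝ)) / 2 *
          ⨆ z : {z : X // z ≠ xstar}, (∑ u ∈ NS π N S z.1, P z.1 u)⁻¹ :=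
  stmt11_general π hπpos hπsum N hNsym xstar hxstar P hPnn hrev hsupp S hS1 hSR
end

section
/- Let X₀ ⊆ X, let Ē₀ = {(x,x') ∈ X₀² : x ≠ x', P(x,x') > 0}, let E₀ ⊆ Ē₀, w : E₀ → (0,∞), and let φ : Γ_{E₀} → [0,∞) satisfy Σ_{γ∈Γ_{E₀}(x,x')} φ(γ) = π(x)·π(x') for all x, x' ∈ X₀ with x ≠ x'. Then Gap_{X₀}(P) ≥ 1/A(E₀, w, φ). -/
open Finset

section Aux

variable {X : Type*}

lemma edgeList_map_snd (b : X) (rest : List X) :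
    (edgeList (b :: rest)).map Prod.snd = rest := by
  induction rest generalizing b with
  | nil => rfl
  | cons c t ih => simpa [edgeList] using ih c

lemma edgeList_inj {γ₁ γ₂ : List X} (h1 : 2 ≤ γ₁.length) (h2 : 2 ≤ γ₂.length)
    (h : edgeList γ₁ = edgeList γ₂) : γ₁ = γ₂ := by
  match γ₁, γ₂ with
  | a :: b :: t, a' :: b' :: t' =>
    simp only [edgeList, List.cons.injEq, Prod.mk.injEq] at h
    obtain ⟨⟨rfl, rfl⟩, h3⟩ := h
    have := congrArg (List.map Prod.snd) h3
    rw [edgeList_map_snd, edgeList_map_snd] at this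
    simp [this]

lemma IsPathIn.two_le_length {E : Finset (X × X)} {x y : X} {γ : List X}
    (h : IsPathIn E x y γ) : 2 ≤ γ.length := by
  obtain ⟨hxy, hh, hl, -, -⟩ := h
  match γ with
  | [] => simp at hh
  | [a] =>
    simp only [List.head?_cons, Option.some.injEq] at hh
    simp only [List.getLast?_singleton, Option.some.injEq] at hl
    exact absurd (hh.symm.trans hl) hxy
  | a :: b :: t => simp

lemma telescope_edgeList (f : X → ℝ) :
    ∀ (γ : List X) (a b : X), γ.head? = some a → γ.getLast? = some b →
      ((edgeList γ).map fun e => f e.1 - f e.2).sum = f a - f b := by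
  intro γ
  induction γ with
  | nil => intro a b ha; simp at ha
  | cons c t ih =>
    intro a b ha hb
    simp only [List.head?_cons, Option.some.injEq] at ha
    subst ha
    match t with
    | [] =>
      simp only [List.getLast?_singleton, Option.some.injEq] at hb
      simp [edgeList, hb]
    | d :: t' =>
      have hb' : (d :: t').getLast? = some b := by
        rw [List.getLast?_cons_cons] at hb; exact hb
      have := ih d b rfl hb'
      simp only [edgeList, List.map_cons, List.sum_cons, this]
      ring

lemma paths_finite [Fintype X] (E : Finset (X × X)) :
    {γ : List X | ∃ x y, IsPathIn E x y γ}.Finite := by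
  classical
  have hfin : {l : List (X × X) | l.Nodup}.Finite := by
    rw [← Subtype.range_coe_subtype]
    exact Set.finite_range _
  apply Set.Finite.of_finite_image (f := edgeList)
  · apply hfin.subset
    rintro l ⟨γ, ⟨x, y, hγ⟩, rfl⟩
    exact hγ.2.2.2.2
  · rintro γ₁ ⟨x₁, y₁, h₁⟩ γ₂ ⟨x₂, y₂, h₂⟩ h
    exact edgeList_inj h₁.two_le_length h₂.two_le_length h

lemma tsum_finite_subtype {p : List X → Prop} (hp : {γ : List X | p γ}.Finite)
    (g : List X → ℝ) :
    ∑' γ : {γ : List X // p γ}, g ↑γ = ∑ γ ∈ hp.toFinset, g γ := by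
  haveI : Fintype {γ : List X // p γ} := hp.fintype
  rw [tsum_fintype]
  exact (Finset.sum_subtype hp.toFinset (fun γ => hp.mem_toFinset) g).symm

end Aux

section Aux2

variable {X : Type*}

lemma path_cs [DecidableEq (X × X)] {E : Finset (X × X)} {w : X × X → ℝ}
    (hw : ∀ e ∈ E, 0 < w e) (f : X → ℝ) {x y : X} {γ : List X} (h : IsPathIn E x y γ) :
    (f x - f y) ^ 2 ≤ wlen w γ * ∑ e ∈ (edgeList γ).toFinset, (f e.1 - f e.2) ^ 2 / w e := by
  obtain ⟨hxy, hh, hl, hE, hnd⟩ := h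
  have hpos : ∀ e ∈ (edgeList γ).toFinset, 0 < w e := fun e he =>
    hw e (hE e (List.mem_toFinset.mp he))
  have h1 : f x - f y = ∑ e ∈ (edgeList γ).toFinset, (f e.1 - f e.2) := by
    rw [List.sum_toFinset _ hnd]
    exact (telescope_edgeList f γ x y hh hl).symm
  have h2 : wlen w γ = ∑ e ∈ (edgeList γ).toFinset, w e := by
    rw [List.sum_toFinset _ hnd]; rfl
  calc (f x - f y) ^ 2
      = (∑ e ∈ (edgeList γ).toFinset,
          Real.sqrt (w e) * ((f e.1 - f e.2) / Real.sqrt (w e))) ^ 2 := by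
        rw [h1]; congr 1
        refine Finset.sum_congr rfl fun e he => ?_
        rw [mul_div_cancel₀ _ (ne_of_gt (Real.sqrt_pos.mpr (hpos e he)))]
    _ ≤ (∑ e ∈ (edgeList γ).toFinset, Real.sqrt (w e) ^ 2) *
        ∑ e ∈ (edgeList γ).toFinset, ((f e.1 - f e.2) / Real.sqrt (w e)) ^ 2 :=
        Finset.sum_mul_sq_le_sq_mul_sq _ _ _
    _ = wlen w γ * ∑ e ∈ (edgeList γ).toFinset, (f e.1 - f e.2) ^ 2 / w e := by
        rw [h2]; congr 1
        · exact Finset.sum_congr rfl fun e he => Real.sq_sqrt (hpos e he).le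
        · refine Finset.sum_congr rfl fun e he => ?_
          rw [div_pow, Real.sq_sqrt (hpos e he).le]

lemma isPathIn_eta {E : Finset (X × X)} {x y a b : X} {γ : List X}
    (h : IsPathIn E x y γ) (h' : IsPathIn E a b γ) : x = a ∧ y = b := by
  obtain ⟨-, hh, hl, -, -⟩ := h
  obtain ⟨-, hh', hl', -, -⟩ := h'
  constructor
  · have := hh.symm.trans hh'; simpa using this
  · have := hl.symm.trans hl'; simpa using this

end Aux2


theorem stmt12 {X : Type*} [Fintype X]
    (π : X → ℝ) (hπpos : ∀ x, 0 < π x) (hπsum : ∑ x, π x = 1)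
    (P : Matrix X X ℝ) (hProw : ∀ x, ∑ y, P x y = 1) (hPnn : ∀ x y, 0 ≤ P x y)
    (X0 : Finset X) (E0 : Finset (X × X))
    (hE0 : ∀ e ∈ E0, e.1 ∈ X0 ∧ e.2 ∈ X0 ∧ e.1 ≠ e.2 ∧ 0 < P e.1 e.2)
    (w : X × X → ℝ) (hw : ∀ e ∈ E0, 0 < w e)
    (φ : List X → ℝ) (hφnn : ∀ γ, (∃ x y, IsPathIn E0 x y γ) → 0 ≤ φ γ)
    (hflow : ∀ x ∈ X0, ∀ y ∈ X0, x ≠ y → flowBetween E0 φ x y = π x * π y) :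
    1 / congestion π P E0 w φ ≤ restGap P π X0 := by
  classical
  by_cases hX0 : ∃ x ∈ X0, ∃ y ∈ X0, x ≠ y
  · obtain ⟨x₀, hx₀, y₀, hy₀, hxy₀⟩ := hX0
    set M : Finset (List X) := (paths_finite E0).toFinset with hMdef
    have hM : ∀ γ : List X, γ ∈ M ↔ ∃ x y, IsPathIn E0 x y γ := fun γ =>
      Set.Finite.mem_toFinset _
    have hedges : ∀ γ ∈ M, ∀ e ∈ edgeList γ, e ∈ E0 := by
      intro γ hγ
      obtain ⟨x, y, hp⟩ := (hM γ).mp hγ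
      exact hp.2.2.2.1
    have hφM : ∀ γ ∈ M, 0 ≤ φ γ := fun γ hγ => hφnn γ ((hM γ).mp hγ)
    have hwlenM : ∀ γ ∈ M, 0 ≤ wlen w γ := by
      intro γ hγ
      apply List.sum_nonneg
      intro a ha
      obtain ⟨e, he, rfl⟩ := List.mem_map.mp ha
      exact (hw e (hedges γ hγ e he)).le
    have hfin_xy : ∀ x y : X, {γ : List X | IsPathIn E0 x y γ}.Finite := fun x y =>
      (paths_finite E0).subset fun γ h => ⟨x, y, h⟩
    have hflow' : ∀ x y : X, flowBetween E0 φ x y =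
        ∑ γ ∈ M.filter (fun γ => IsPathIn E0 x y γ), φ γ := by
      intro x y
      rw [flowBetween, tsum_finite_subtype (hfin_xy x y)]
      refine Finset.sum_congr ?_ fun _ _ => rfl
      ext γ
      simp only [Set.Finite.mem_toFinset, Set.mem_setOf_eq, Finset.mem_filter, hM]
      exact ⟨fun h => ⟨⟨x, y, h⟩, h⟩, fun h => h.2⟩
    have hfin_e : ∀ e : X × X,
        {γ : List X | (∃ x y, IsPathIn E0 x y γ) ∧ e ∈ edgeList γ}.Finite := fun e =>
      (paths_finite E0).subset fun γ h => h.1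
    have hnum : ∀ e : X × X,
        (∑' γ : {γ : List X // (∃ x y, IsPathIn E0 x y γ) ∧ e ∈ edgeList γ}, wlen w γ * φ γ) =
          ∑ γ ∈ M.filter (fun γ => e ∈ edgeList γ), wlen w γ * φ γ := by
      intro e
      refine (tsum_finite_subtype (hfin_e e) (fun l => wlen w l * φ l)).trans ?_
      refine Finset.sum_congr ?_ fun _ _ => rfl
      ext γ
      simp only [Set.Finite.mem_toFinset, Set.mem_setOf_eq, Finset.mem_filter, hM]
    have hQpos : ∀ e ∈ E0, 0 < π e.1 * P e.1 e.2 * w e := fun e he =>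
      mul_pos (mul_pos (hπpos e.1) (hE0 e he).2.2.2) (hw e he)
    have hAe : ∀ e ∈ E0, (∑ γ ∈ M.filter (fun γ => e ∈ edgeList γ), wlen w γ * φ γ) ≤
        congestion π P E0 w φ * (π e.1 * P e.1 e.2 * w e) := by
      intro e he
      rw [← div_le_iff₀ (hQpos e he)]
      rw [congestion]
      have hb : BddAbove (Set.range fun e : X × X =>
          ⨆ _ : e ∈ E0,
            (∑' γ : {γ : List X // (∃ x y, IsPathIn E0 x y γ) ∧ e ∈ edgeList γ},
              wlen w γ * φ γ) / (π e.1 * P e.1 e.2 * w e)) := Finite.bddAbove_range _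
      refine le_trans ?_ (le_ciSup hb e)
      rw [ciSup_pos he, hnum e]
    apply le_csInf
    · refine ⟨_, fun z => if z = x₀ then (1 : ℝ) else 0, ?_, rfl⟩
      have hnn : ∀ x ∈ X0, 0 ≤ ∑ y ∈ X0,
          ((if x = x₀ then (1:ℝ) else 0) - (if y = x₀ then 1 else 0)) ^ 2 * π x * π y :=
        fun x _ => Finset.sum_nonneg fun y _ =>
          mul_nonneg (mul_nonneg (sq_nonneg _) (hπpos x).le) (hπpos y).le
      refine Finset.sum_pos' hnn ⟨x₀, hx₀, ?_⟩
      refine Finset.sum_pos' (fun y _ =>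
        mul_nonneg (mul_nonneg (sq_nonneg _) (hπpos x₀).le) (hπpos y).le) ⟨y₀, hy₀, ?_⟩
      have hne : y₀ ≠ x₀ := fun h => hxy₀ h.symm
      show 0 < ((if x₀ = x₀ then (1:ℝ) else 0) - (if y₀ = x₀ then (1:ℝ) else 0)) ^ 2 *
        π x₀ * π y₀
      have e1 : (if x₀ = x₀ then (1:ℝ) else 0) = 1 := by simp
      have e2 : (if y₀ = x₀ then (1:ℝ) else 0) = 0 := by simp [hne]
      rw [e1, e2]
      have h1 := hπpos x₀
      have h2 := hπpos y₀
      nlinarith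
    · rintro r ⟨f, hV, rfl⟩
      set V := ∑ x ∈ X0, ∑ y ∈ X0, (f x - f y) ^ 2 * π x * π y with hVdef
      set D := ∑ x ∈ X0, ∑ y ∈ X0, (f x - f y) ^ 2 * P x y * π x with hDdef
      set G : List X → ℝ := fun γ =>
        wlen w γ * (∑ e ∈ E0, if e ∈ edgeList γ then (f e.1 - f e.2) ^ 2 / w e else 0) * φ γ
        with hG
      have hBnn : ∀ γ, 0 ≤ ∑ e ∈ E0,
          if e ∈ edgeList γ then (f e.1 - f e.2) ^ 2 / w e else 0 := by
        intro γ
        refine Finset.sum_nonneg fun e he => ?_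
        split
        · exact div_nonneg (sq_nonneg _) (hw e he).le
        · exact le_rfl
      have hGnn : ∀ γ ∈ M, 0 ≤ G γ :=
        fun γ hγ => mul_nonneg (mul_nonneg (hwlenM γ hγ) (hBnn γ)) (hφM γ hγ)
      -- Step 1
      have step1 : V ≤ ∑ x ∈ X0, ∑ y ∈ X0,
          ∑ γ ∈ M.filter (fun γ => IsPathIn E0 x y γ), G γ := by
        rw [hVdef]
        refine Finset.sum_le_sum fun x hx => Finset.sum_le_sum fun y hy => ?_
        by_cases hxy : x = y
        · subst hxy
          have hemp : M.filter (fun γ => IsPathIn E0 x x γ) = ∅ :=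
            Finset.filter_eq_empty_iff.mpr fun γ _ => fun h => h.1 rfl
          simp [hemp]
        · rw [show (f x - f y) ^ 2 * π x * π y = (f x - f y) ^ 2 * (π x * π y) by ring,
            ← hflow x hx y hy hxy, hflow' x y, Finset.mul_sum]
          refine Finset.sum_le_sum fun γ hγ => ?_
          have hγf := Finset.mem_filter.mp hγ
          have hpath := hγf.2
          have hB : (f x - f y) ^ 2 ≤ wlen w γ *
              (∑ e ∈ E0, if e ∈ edgeList γ then (f e.1 - f e.2) ^ 2 / w e else 0) := by
            have hcs := path_cs hw f hpath
            have heq : (edgeList γ).toFinset = E0.filter (fun e => e ∈ edgeList γ) := by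
              ext e
              simp only [List.mem_toFinset, Finset.mem_filter]
              exact ⟨fun h => ⟨hpath.2.2.2.1 e h, h⟩, fun h => h.2⟩
            rw [heq, Finset.sum_filter] at hcs
            exact hcs
          rw [hG]
          exact mul_le_mul_of_nonneg_right hB (hφM γ hγf.1)
      -- Step 1.5
      have step15 : (∑ x ∈ X0, ∑ y ∈ X0,
          ∑ γ ∈ M.filter (fun γ => IsPathIn E0 x y γ), G γ) ≤ ∑ γ ∈ M, G γ := by
        calc (∑ x ∈ X0, ∑ y ∈ X0, ∑ γ ∈ M.filter (fun γ => IsPathIn E0 x y γ), G γ)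
            = ∑ x ∈ X0, ∑ y ∈ X0, ∑ γ ∈ M, if IsPathIn E0 x y γ then G γ else 0 :=
              Finset.sum_congr rfl fun x _ => Finset.sum_congr rfl fun y _ =>
                Finset.sum_filter _ _
          _ = ∑ x ∈ X0, ∑ γ ∈ M, ∑ y ∈ X0, if IsPathIn E0 x y γ then G γ else 0 :=
              Finset.sum_congr rfl fun x _ => Finset.sum_comm
          _ = ∑ γ ∈ M, ∑ x ∈ X0, ∑ y ∈ X0, if IsPathIn E0 x y γ then G γ else 0 :=
              Finset.sum_comm
          _ ≤ ∑ γ ∈ M, G γ := by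
              refine Finset.sum_le_sum fun γ hγ => ?_
              obtain ⟨a, b, hab⟩ := (hM γ).mp hγ
              calc (∑ x ∈ X0, ∑ y ∈ X0, if IsPathIn E0 x y γ then G γ else 0)
                  ≤ ∑ x ∈ X0, ∑ y ∈ X0, if x = a ∧ y = b then G γ else 0 := by
                    refine Finset.sum_le_sum fun x _ => Finset.sum_le_sum fun y _ => ?_
                    split_ifs with h h' h'
                    · exact le_rfl
                    · exact absurd (isPathIn_eta h hab) h'
                    · exact hGnn γ hγ
                    · exact le_rfl
                _ ≤ G γ := by
                    have h2 : ∀ x ∈ X0, (∑ y ∈ X0, if x = a ∧ y = b then G γ else 0) =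
                        if x = a then (∑ y ∈ X0, if y = b then G γ else 0) else 0 := by
                      intro x _
                      by_cases hxa : x = a <;> simp [hxa]
                    rw [Finset.sum_congr rfl h2,
                      Finset.sum_ite_eq' X0 a (fun _ => ∑ y ∈ X0, if y = b then G γ else 0),
                      Finset.sum_ite_eq' X0 b (fun _ => G γ)]
                    split_ifs <;> first | exact le_rfl | exact hGnn γ hγ
      -- Step 2
      have step2 : (∑ γ ∈ M, G γ) = ∑ e ∈ E0, ((f e.1 - f e.2) ^ 2 / w e) *
          ∑ γ ∈ M.filter (fun γ => e ∈ edgeList γ), wlen w γ * φ γ := by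
        have h1 : ∀ γ ∈ M, G γ = ∑ e ∈ E0, ((f e.1 - f e.2) ^ 2 / w e) *
            (if e ∈ edgeList γ then wlen w γ * φ γ else 0) := by
          intro γ _
          rw [hG]
          simp only
          rw [Finset.mul_sum, Finset.sum_mul]
          refine Finset.sum_congr rfl fun e _ => ?_
          split_ifs <;> ring
        rw [Finset.sum_congr rfl h1, Finset.sum_comm]
        refine Finset.sum_congr rfl fun e _ => ?_
        rw [Finset.mul_sum, Finset.sum_filter]
        simp only [mul_ite, mul_zero]
      -- Step 3
      have step3 : (∑ e ∈ E0, ((f e.1 - f e.2) ^ 2 / w e) *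
          ∑ γ ∈ M.filter (fun γ => e ∈ edgeList γ), wlen w γ * φ γ) ≤
            congestion π P E0 w φ *
              ∑ e ∈ E0, (f e.1 - f e.2) ^ 2 * P e.1 e.2 * π e.1 := by
        calc (∑ e ∈ E0, ((f e.1 - f e.2) ^ 2 / w e) *
            ∑ γ ∈ M.filter (fun γ => e ∈ edgeList γ), wlen w γ * φ γ)
            ≤ ∑ e ∈ E0, ((f e.1 - f e.2) ^ 2 / w e) *
              (congestion π P E0 w φ * (π e.1 * P e.1 e.2 * w e)) :=
              Finset.sum_le_sum fun e he => mul_le_mul_of_nonneg_left (hAe e he)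
                (div_nonneg (sq_nonneg _) (hw e he).le)
          _ = congestion π P E0 w φ *
              ∑ e ∈ E0, (f e.1 - f e.2) ^ 2 * P e.1 e.2 * π e.1 := by
              rw [Finset.mul_sum]
              refine Finset.sum_congr rfl fun e he => ?_
              have hwne : w e ≠ 0 := (hw e he).ne'
              field_simp
      set S1 := ∑ e ∈ E0, (f e.1 - f e.2) ^ 2 * P e.1 e.2 * π e.1 with hS1def
      have hS1nn : 0 ≤ S1 := Finset.sum_nonneg fun e he =>
        mul_nonneg (mul_nonneg (sq_nonneg _) (hPnn _ _)) (hπpos _).le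
      have hS1D : S1 ≤ D := by
        rw [hDdef, ← Finset.sum_product']
        refine Finset.sum_le_sum_of_subset_of_nonneg ?_ fun p _ _ =>
          mul_nonneg (mul_nonneg (sq_nonneg _) (hPnn _ _)) (hπpos _).le
        intro e he
        rw [Finset.mem_product]
        exact ⟨(hE0 e he).1, (hE0 e he).2.1⟩
      have hchain : V ≤ congestion π P E0 w φ * S1 :=
        step1.trans ((step15.trans (le_of_eq step2)).trans step3)
      have hprod : 0 < congestion π P E0 w φ * S1 := lt_of_lt_of_le hV hchain
      have hS1pos : 0 < S1 := by
        rcases eq_or_lt_of_le hS1nn with h | h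
        · rw [← h, mul_zero] at hprod
          exact absurd hprod (lt_irrefl 0)
        · exact h
      have hApos : 0 < congestion π P E0 w φ := by
        rcases mul_pos_iff.mp hprod with ⟨h1, -⟩ | ⟨-, h2⟩
        · exact h1
        · exact absurd hS1pos (not_lt.mpr h2.le)
      have hVD : V ≤ congestion π P E0 w φ * D :=
        hchain.trans (mul_le_mul_of_nonneg_left hS1D hApos.le)
      rw [div_le_div_iff₀ hApos hV]
      nlinarith [hVD]
  · have hE0e : E0 = ∅ := by
      push_neg at hX0
      ext e
      simp only [Finset.notMem_empty, iff_false]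
      intro he
      obtain ⟨h1, h2, h3, -⟩ := hE0 e he
      exact h3 (hX0 e.1 h1 e.2 h2)
    have hA0 : congestion π P E0 w φ = 0 := by
      rw [congestion, hE0e]
      have h1 : ∀ e : X × X, (⨆ _ : e ∈ (∅ : Finset (X × X)),
          (∑' γ : {γ : List X // (∃ x y, IsPathIn (∅ : Finset (X × X)) x y γ) ∧
            e ∈ edgeList γ}, wlen w γ * φ γ) / (π e.1 * P e.1 e.2 * w e)) = 0 := by
        intro e
        haveI : IsEmpty (e ∈ (∅ : Finset (X × X))) := ⟨fun h => by simp at h⟩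
        exact Real.iSup_of_isEmpty _
      rw [iSup_congr h1]
      rcases isEmpty_or_nonempty (X × X) with h | h
      · exact Real.iSup_of_isEmpty _
      · exact ciSup_const
    have hG0 : restGap P π X0 = 0 := by
      rw [restGap]
      convert Real.sInf_empty
      ext r
      simp only [Set.mem_setOf_eq, Set.mem_empty_iff_false, iff_false]
      rintro ⟨f, hpos, -⟩
      push_neg at hX0
      have hz : (∑ x ∈ X0, ∑ y ∈ X0, (f x - f y) ^ 2 * π x * π y) = 0 := by
        refine Finset.sum_eq_zero fun x hx => Finset.sum_eq_zero fun y hy => ?_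
        rw [hX0 x hx y hy]
        ring
      rw [hz] at hpos
      exact lt_irrefl _ hpos
    rw [hA0, hG0]
    norm_num
end
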